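/- arXiv:1609.07180 — 10 statements merged into one kernel-verified Lean document; each statement's English description precedes it below -/
import Mathlib

section
/- The matrix G := σ^{-1/2} L^{-1} (I − Σ_{j=1}^k (1 − (σ/(μλ_j + σ))^{1/2}) v_j v_jᵀ) satisfies GGᵀ = Γ̂_cond; that is, G is a square-root factor of the low-rank approximate covariance matrix. -/
/-!
The matrices involved are functions of the mutually orthogonal projections `v j v jᵀ`, `j < k`,
and such functions multiply as their eigenvalues do. The middle factor of `G` has eigenvalue
`√(σ / (μ λ_j + σ))` on `v j` and `1` on the complement, while `σ I + μ ∑ λ_j v j v jᵀ` has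
eigenvalues `μ λ_j + σ` and `σ`; hence the square of the former is `σ` times the inverse of the
latter, which is `G Gᵀ = Γ̂` after the factors `L⁻¹` and `σ^{-1/2}` are put back.
-/

open Finset Matrix

namespace Matrix

variable {ι n R : Type*} [CommRing R]

theorem sum_smul_vecMulVec_mul_sum [Fintype n] [DecidableEq ι] {v : ι → n → R}
    (horth : ∀ i j, v i ⬝ᵥ v j = if i = j then 1 else 0) (S : Finset ι) (a b : ι → R) :
    (∑ i ∈ S, a i • vecMulVec (v i) (v i)) * (∑ j ∈ S, b j • vecMulVec (v j) (v j)) =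
      ∑ j ∈ S, (a j * b j) • vecMulVec (v j) (v j) := by
  simp_rw [sum_mul_sum, smul_mul_smul_comm, vecMulVec_mul_vecMulVec, horth, ite_smul, one_smul,
    zero_smul, apply_ite (vecMulVec _), vecMulVec_zero, smul_ite, smul_zero, sum_ite_eq]
  exact sum_congr rfl fun i hi => if_pos hi

variable [DecidableEq n]

/-- For orthonormal `v j`, the symmetric matrix with eigenvalue `f j` on `v j` for `j ∈ S` and
eigenvalue `1` on the orthogonal complement of these vectors. -/
def spectralMatrix (v : ι → n → R) (S : Finset ι) (f : ι → R) : Matrix n n R :=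
  1 + ∑ j ∈ S, (f j - 1) • vecMulVec (v j) (v j)

variable {v : ι → n → R} (S : Finset ι)

theorem spectralMatrix_of_eqOn_one {f : ι → R} (hf : ∀ j ∈ S, f j = 1) :
    spectralMatrix v S f = 1 := by
  simp +contextual [spectralMatrix, hf]

theorem transpose_spectralMatrix (f : ι → R) :
    (spectralMatrix v S f)ᵀ = spectralMatrix v S f := by
  simp [spectralMatrix, transpose_sum]

variable [Fintype n] [DecidableEq ι]

theorem spectralMatrix_mul (horth : ∀ i j, v i ⬝ᵥ v j = if i = j then 1 else 0) (f g : ι → R) :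
    spectralMatrix v S f * spectralMatrix v S g = spectralMatrix v S (f * g) := by
  simp only [spectralMatrix, add_mul, mul_add, one_mul, mul_one,
    sum_smul_vecMulVec_mul_sum horth, add_assoc, ← sum_add_distrib, ← add_smul]
  refine congrArg (1 + ·) (sum_congr rfl fun j _ => congrArg (· • _) ?_)
  rw [Pi.mul_apply]
  ring

theorem inv_smul_spectralMatrix {K : Type*} [Field K] {v : ι → n → K}
    (horth : ∀ i j, v i ⬝ᵥ v j = if i = j then 1 else 0) {c : K} (hc : c ≠ 0)
    {f g : ι → K} (hfg : ∀ j ∈ S, f j * g j = 1) :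
    (c • spectralMatrix v S f)⁻¹ = c⁻¹ • spectralMatrix v S g := by
  refine inv_eq_right_inv ?_
  rw [smul_mul_smul_comm, mul_inv_cancel₀ hc, one_smul, spectralMatrix_mul S horth,
    spectralMatrix_of_eqOn_one S (f := f * g) hfg]

end Matrix

theorem stmt2_general
    (n : ℕ)
    (L : Matrix (Fin n) (Fin n) ℝ)
    (μ σ : ℝ) (hμ : 0 < μ) (hσ : 0 < σ)
    (v : Fin n → Fin n → ℝ) (lam : Fin n → ℝ)
    (horth : ∀ i j, v i ⬝ᵥ v j = if i = j then (1 : ℝ) else 0)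
    (hlam_nonneg : ∀ j, 0 ≤ lam j)
    (k : ℕ)
    (Γhat : Matrix (Fin n) (Fin n) ℝ)
    (hΓhat : Γhat = L⁻¹ * (σ • (1 : Matrix (Fin n) (Fin n) ℝ) +
        μ • ∑ j ∈ Finset.univ.filter (fun j : Fin n => (j : ℕ) < k),
          lam j • vecMulVec (v j) (v j))⁻¹ * (L⁻¹)ᵀ)
    (G : Matrix (Fin n) (Fin n) ℝ)
    (hG : G = (Real.sqrt σ)⁻¹ • (L⁻¹ * ((1 : Matrix (Fin n) (Fin n) ℝ) -
        ∑ j ∈ Finset.univ.filter (fun j : Fin n => (j : ℕ) < k),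
          (1 - Real.sqrt (σ / (μ * lam j + σ))) • vecMulVec (v j) (v j)))) :
    G * Gᵀ = Γhat := by
  set S := Finset.univ.filter (fun j : Fin n => (j : ℕ) < k)
  set s : Fin n → ℝ := fun j => Real.sqrt (σ / (μ * lam j + σ))
  have hpos (j : Fin n) : 0 < μ * lam j + σ := by have := hlam_nonneg j; positivity
  have hs_sq (j : Fin n) : (μ * lam j + σ) / σ * (s j * s j) = 1 := by
    rw [Real.mul_self_sqrt (div_pos hσ (hpos j)).le]
    field_simp [(hpos j).ne']
  have hG' : G = (Real.sqrt σ)⁻¹ • (L⁻¹ * spectralMatrix v S s) := by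
    rw [hG, spectralMatrix, sub_eq_add_neg, ← sum_neg_distrib]
    simp_rw [← neg_smul, neg_sub]
    rfl
  have hprior : σ • (1 : Matrix (Fin n) (Fin n) ℝ) + μ • ∑ j ∈ S, lam j • vecMulVec (v j) (v j) =
      σ • spectralMatrix v S (fun j => (μ * lam j + σ) / σ) := by
    rw [spectralMatrix, smul_add, smul_sum, smul_sum]
    simp_rw [smul_smul]
    refine congrArg (σ • 1 + ·) (sum_congr rfl fun j _ => ?_)
    congr 1
    field_simp
    ring
  rw [hΓhat, hprior, inv_smul_spectralMatrix S horth hσ.ne' (fun j _ => hs_sq j), hG',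
    transpose_smul, transpose_mul, transpose_spectralMatrix, smul_mul_smul_comm,
    ← mul_inv, Real.mul_self_sqrt hσ.le, ← Matrix.mul_assoc, Matrix.mul_assoc L⁻¹,
    spectralMatrix_mul S horth, Matrix.mul_smul, smul_mul_assoc]
  rfl

theorem stmt2
    (m n : ℕ) (hm : 0 < m) (hn : 0 < n)
    (A : Matrix (Fin m) (Fin n) ℝ) (L : Matrix (Fin n) (Fin n) ℝ) (hL : IsUnit L.det)
    (μ σ : ℝ) (hμ : 0 < μ) (hσ : 0 < σ)
    (v : Fin n → Fin n → ℝ) (lam : Fin n → ℝ)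
    (horth : ∀ i j, v i ⬝ᵥ v j = if i = j then (1 : ℝ) else 0)
    (hlam_nonneg : ∀ j, 0 ≤ lam j) (hlam_anti : Antitone lam)
    (hHdecomp : (L⁻¹)ᵀ * Aᵀ * A * L⁻¹ = ∑ j, lam j • vecMulVec (v j) (v j))
    (k : ℕ) (hk : k ≤ n)
    (Γhat : Matrix (Fin n) (Fin n) ℝ)
    (hΓhat : Γhat = L⁻¹ * (σ • (1 : Matrix (Fin n) (Fin n) ℝ) +
        μ • ∑ j ∈ Finset.univ.filter (fun j : Fin n => (j : ℕ) < k),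
          lam j • vecMulVec (v j) (v j))⁻¹ * (L⁻¹)ᵀ)
    (G : Matrix (Fin n) (Fin n) ℝ)
    (hG : G = (Real.sqrt σ)⁻¹ • (L⁻¹ * ((1 : Matrix (Fin n) (Fin n) ℝ) -
        ∑ j ∈ Finset.univ.filter (fun j : Fin n => (j : ℕ) < k),
          (1 - Real.sqrt (σ / (μ * lam j + σ))) • vecMulVec (v j) (v j)))) :
    G * Gᵀ = Γhat :=
  stmt2_general n L μ σ hμ hσ v lam horth hlam_nonneg k Γhat hΓhat G hG
end

section
/- (Proposition 1) For all x, z ∈ ℝ^n, the Metropolis-Hastings acceptance ratio for the low-rank independence sampler satisfies h(z)g(x)/(h(x)g(z)) = w(z)/w(x), where w(x) = exp(−(1/2) xᵀ (Γ_cond^{-1} − Γ̂_cond^{-1}) x); in particular, the mean terms involving x_cond and x̂_cond cancel because Γ_cond^{-1} x_cond = μAᵀb = Γ̂_cond^{-1} x̂_cond. -/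
/-!
Both covariances are positive definite, so the normalising constants are positive and cancel in
the ratio. Expanding `(x - a)ᵀ P (x - a) = xᵀ P x - 2 xᵀ P a + aᵀ P a`, the cross term depends on
the mean only through `P a`, which is `μ Aᵀ b` for both Gaussians; hence the linear terms cancel as
well and only the quadratic forms of the precisions survive.
-/

open Matrix

section Gaussian

variable {ι : Type*} [Fintype ι]

theorem Matrix.sub_dotProduct_mulVec_sub {R : Type*} [CommRing R] {P : Matrix ι ι R}
    (hP : P.IsSymm) {a s : ι → R} (ha : P *ᵥ a = s) (x : ι → R) :
    (x - a) ⬝ᵥ (P *ᵥ (x - a)) = x ⬝ᵥ (P *ᵥ x) - 2 * (x ⬝ᵥ s) + a ⬝ᵥ s := by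
  have hax : a ⬝ᵥ (P *ᵥ x) = x ⬝ᵥ s := by
    rw [dotProduct_mulVec, ← hP.eq, vecMul_transpose, ha, dotProduct_comm]
  rw [mulVec_sub, dotProduct_sub, sub_dotProduct, sub_dotProduct, hax, ha]
  ring

theorem gaussian_ratio_eq {P Q : Matrix ι ι ℝ} (hP : P.IsSymm) (hQ : Q.IsSymm) {a c s : ι → ℝ}
    (ha : P *ᵥ a = s) (hc : Q *ᵥ c = s) {C D : ℝ} (hC : C ≠ 0) (hD : D ≠ 0) (x z : ι → ℝ) :
    C * Real.exp (-(1/2) * ((z - a) ⬝ᵥ (P *ᵥ (z - a)))) *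
        (D * Real.exp (-(1/2) * ((x - c) ⬝ᵥ (Q *ᵥ (x - c))))) /
      (C * Real.exp (-(1/2) * ((x - a) ⬝ᵥ (P *ᵥ (x - a)))) *
        (D * Real.exp (-(1/2) * ((z - c) ⬝ᵥ (Q *ᵥ (z - c)))))) =
    Real.exp (-(1/2) * (z ⬝ᵥ ((P - Q) *ᵥ z))) / Real.exp (-(1/2) * (x ⬝ᵥ ((P - Q) *ᵥ x))) := by
  rw [mul_mul_mul_comm C, mul_mul_mul_comm C _ D, mul_div_mul_left _ _ (mul_ne_zero hC hD),
    ← Real.exp_add, ← Real.exp_add, ← Real.exp_sub, ← Real.exp_sub]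
  congr 1
  simp only [sub_dotProduct_mulVec_sub hP ha, sub_dotProduct_mulVec_sub hQ hc, sub_mulVec,
    dotProduct_sub]
  ring

end Gaussian

section Precision

variable {ι κ : Type*} [Fintype ι] [DecidableEq ι]

theorem Matrix.posDef_smul_transpose_mul_self_add_smul_transpose_mul_self [Fintype κ]
    (A : Matrix κ ι ℝ) {L : Matrix ι ι ℝ} (hL : IsUnit L.det) {μ σ : ℝ} (hμ : 0 ≤ μ)
    (hσ : 0 < σ) : (μ • (Aᵀ * A) + σ • (Lᵀ * L)).PosDef :=
  PosDef.posSemidef_add ((posSemidef_conjTranspose_mul_self A).smul hμ)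
    ((PosDef.conjTranspose_mul_self L
      (mulVec_injective_of_isUnit ((isUnit_iff_isUnit_det L).2 hL))).smul hσ)

theorem Matrix.posDef_smul_one_add_smul_sum_vecMulVec {σ μ : ℝ} (hσ : 0 < σ) (hμ : 0 ≤ μ)
    (s : Finset κ) (lam : κ → ℝ) (hlam : ∀ j ∈ s, 0 ≤ lam j) (v : κ → ι → ℝ) :
    (σ • (1 : Matrix ι ι ℝ) + μ • ∑ j ∈ s, lam j • vecMulVec (v j) (v j)).PosDef :=
  (PosDef.one.smul hσ).add_posSemidef <| (posSemidef_sum s fun j hj =>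
    (posSemidef_vecMulVec_self_star (v j)).smul (hlam j hj)).smul hμ

theorem Matrix.PosDef.mul_mul_transpose_same {M : Matrix ι ι ℝ} (hM : M.PosDef)
    {B : Matrix ι ι ℝ} (hB : IsUnit B.det) : (B * M * Bᵀ).PosDef :=
  hM.mul_mul_conjTranspose_same (vecMul_injective_of_isUnit ((isUnit_iff_isUnit_det B).2 hB))

theorem Matrix.nonsing_inv_mulVec_smul_mulVec {R : Type*} [CommRing R] {Γ : Matrix ι ι R}
    (hΓ : IsUnit Γ.det) (c : R) (y : ι → R) : Γ⁻¹ *ᵥ (c • (Γ *ᵥ y)) = c • y := by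
  rw [mulVec_smul, mulVec_mulVec, nonsing_inv_mul _ hΓ, one_mulVec]

end Precision

theorem stmt4_general
    (m n : ℕ) (A : Matrix (Fin m) (Fin n) ℝ) (L : Matrix (Fin n) (Fin n) ℝ) (hL : IsUnit L.det)
    (μ σ : ℝ) (hμ : 0 < μ) (hσ : 0 < σ)
    (b : Fin m → ℝ)
    (v : Fin n → Fin n → ℝ) (lam : Fin n → ℝ)
    (hlam_nonneg : ∀ j, 0 ≤ lam j)
    (k : ℕ)
    (Γcond : Matrix (Fin n) (Fin n) ℝ)
    (hΓcond : Γcond = (μ • (Aᵀ * A) + σ • (Lᵀ * L))⁻¹)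
    (Γhat : Matrix (Fin n) (Fin n) ℝ)
    (hΓhat : Γhat = L⁻¹ * (σ • (1 : Matrix (Fin n) (Fin n) ℝ) +
        μ • ∑ j ∈ Finset.univ.filter (fun j : Fin n => (j : ℕ) < k),
          lam j • vecMulVec (v j) (v j))⁻¹ * (L⁻¹)ᵀ)
    (xcond : Fin n → ℝ) (hxcond : xcond = μ • (Γcond *ᵥ (Aᵀ *ᵥ b)))
    (xhat : Fin n → ℝ) (hxhat : xhat = μ • (Γhat *ᵥ (Aᵀ *ᵥ b)))
    (w : (Fin n → ℝ) → ℝ)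
    (hw : ∀ x, w x = Real.exp (-(1/2) * (x ⬝ᵥ ((Γcond⁻¹ - Γhat⁻¹) *ᵥ x))))
    (hfun : (Fin n → ℝ) → ℝ)
    (hhfun : ∀ x, hfun x = (2 * Real.pi) ^ (-(n : ℝ) / 2) * Γcond.det ^ (-(1 : ℝ) / 2) *
        Real.exp (-(1/2) * ((x - xcond) ⬝ᵥ (Γcond⁻¹ *ᵥ (x - xcond)))))
    (gfun : (Fin n → ℝ) → ℝ)
    (hgfun : ∀ x, gfun x = (2 * Real.pi) ^ (-(n : ℝ) / 2) * Γhat.det ^ (-(1 : ℝ) / 2) *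
        Real.exp (-(1/2) * ((x - xhat) ⬝ᵥ (Γhat⁻¹ *ᵥ (x - xhat)))))
    :
    (∀ x z : Fin n → ℝ, hfun z * gfun x / (hfun x * gfun z) = w z / w x) ∧
    Γcond⁻¹ *ᵥ xcond = μ • (Aᵀ *ᵥ b) ∧
    Γhat⁻¹ *ᵥ xhat = μ • (Aᵀ *ᵥ b) := by
  have hΓcond_pd : Γcond.PosDef := hΓcond ▸
    (posDef_smul_transpose_mul_self_add_smul_transpose_mul_self A hL hμ.le hσ).inv
  have hΓhat_pd : Γhat.PosDef := by
    rw [hΓhat]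
    exact (posDef_smul_one_add_smul_sum_vecMulVec hσ hμ.le _ lam (fun j _ => hlam_nonneg j)
      v).inv.mul_mul_transpose_same (isUnit_nonsing_inv_det L hL)
  have hmean_cond : Γcond⁻¹ *ᵥ xcond = μ • (Aᵀ *ᵥ b) :=
    hxcond ▸ nonsing_inv_mulVec_smul_mulVec hΓcond_pd.det_pos.ne'.isUnit _ _
  have hmean_hat : Γhat⁻¹ *ᵥ xhat = μ • (Aᵀ *ᵥ b) :=
    hxhat ▸ nonsing_inv_mulVec_smul_mulVec hΓhat_pd.det_pos.ne'.isUnit _ _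
  have hnormalizer {Γ : Matrix (Fin n) (Fin n) ℝ} (hΓ : Γ.PosDef) :
      (2 * Real.pi) ^ (-(n : ℝ) / 2) * Γ.det ^ (-(1 : ℝ) / 2) ≠ 0 := by
    have := hΓ.det_pos
    positivity
  refine ⟨fun x z => ?_, hmean_cond, hmean_hat⟩
  rw [hhfun, hhfun, hgfun, hgfun, hw, hw]
  exact gaussian_ratio_eq (isHermitian_iff_isSymm.1 hΓcond_pd.inv.isHermitian)
    (isHermitian_iff_isSymm.1 hΓhat_pd.inv.isHermitian) hmean_cond hmean_hat
    (hnormalizer hΓcond_pd) (hnormalizer hΓhat_pd) x z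

theorem stmt4
    (m n : ℕ) (hm : 0 < m) (hn : 0 < n)
    (A : Matrix (Fin m) (Fin n) ℝ) (L : Matrix (Fin n) (Fin n) ℝ) (hL : IsUnit L.det)
    (μ σ : ℝ) (hμ : 0 < μ) (hσ : 0 < σ)
    (b : Fin m → ℝ)
    (v : Fin n → Fin n → ℝ) (lam : Fin n → ℝ)
    (horth : ∀ i j, v i ⬝ᵥ v j = if i = j then (1 : ℝ) else 0)
    (hlam_nonneg : ∀ j, 0 ≤ lam j) (hlam_anti : Antitone lam)
    (hHdecomp : (L⁻¹)ᵀ * Aᵀ * A * L⁻¹ = ∑ j, lam j • vecMulVec (v j) (v j))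
    (k : ℕ) (hk : k ≤ n)
    (Γcond : Matrix (Fin n) (Fin n) ℝ)
    (hΓcond : Γcond = (μ • (Aᵀ * A) + σ • (Lᵀ * L))⁻¹)
    (Γhat : Matrix (Fin n) (Fin n) ℝ)
    (hΓhat : Γhat = L⁻¹ * (σ • (1 : Matrix (Fin n) (Fin n) ℝ) +
        μ • ∑ j ∈ Finset.univ.filter (fun j : Fin n => (j : ℕ) < k),
          lam j • vecMulVec (v j) (v j))⁻¹ * (L⁻¹)ᵀ)
    (xcond : Fin n → ℝ) (hxcond : xcond = μ • (Γcond *ᵥ (Aᵀ *ᵥ b)))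
    (xhat : Fin n → ℝ) (hxhat : xhat = μ • (Γhat *ᵥ (Aᵀ *ᵥ b)))
    (w : (Fin n → ℝ) → ℝ)
    (hw : ∀ x, w x = Real.exp (-(1/2) * (x ⬝ᵥ ((Γcond⁻¹ - Γhat⁻¹) *ᵥ x))))
    (hfun : (Fin n → ℝ) → ℝ)
    (hhfun : ∀ x, hfun x = (2 * Real.pi) ^ (-(n : ℝ) / 2) * Γcond.det ^ (-(1 : ℝ) / 2) *
        Real.exp (-(1/2) * ((x - xcond) ⬝ᵥ (Γcond⁻¹ *ᵥ (x - xcond)))))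
    (gfun : (Fin n → ℝ) → ℝ)
    (hgfun : ∀ x, gfun x = (2 * Real.pi) ^ (-(n : ℝ) / 2) * Γhat.det ^ (-(1 : ℝ) / 2) *
        Real.exp (-(1/2) * ((x - xhat) ⬝ᵥ (Γhat⁻¹ *ᵥ (x - xhat)))))
    :
    (∀ x z : Fin n → ℝ, hfun z * gfun x / (hfun x * gfun z) = w z / w x) ∧
    Γcond⁻¹ *ᵥ xcond = μ • (Aᵀ *ᵥ b) ∧
    Γhat⁻¹ *ᵥ xhat = μ • (Aᵀ *ᵥ b) :=
  stmt4_general m n A L hL μ σ hμ hσ b v lam hlam_nonneg k Γcond hΓcond Γhat hΓhat xcond hxcond xhat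
    hxhat w hw hfun hhfun gfun hgfun
end

section
/- The difference between the true and approximate inverse covariance matrices satisfies Γ_cond^{-1} − Γ̂_cond^{-1} = μ Lᵀ (Σ_{j=k+1}^n λ_j v_j v_jᵀ) L; in particular this difference is positive semidefinite. -/
open Matrix MeasureTheory ProbabilityTheory Finset

noncomputable section

/-!
Both inverse covariances are congruences by `L`: `Γcond⁻¹ = Lᵀ (μ H + σ I) L` because
`AᵀA = Lᵀ H L`, and `Γ̂cond⁻¹ = Lᵀ (σ I + μ H_k) L` with `H_k` the first `k` spectral terms of `H`.
Their difference is therefore `μ Lᵀ (H - H_k) L`, the congruence of the discarded spectral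
terms, which is positive semidefinite since those terms carry nonnegative weights.
-/

namespace Matrix

theorem sum_filter_lt_add_sum_filter_le {ι α M : Type*} [LinearOrder α] [AddCommMonoid M]
    (s : Finset ι) (g : ι → α) (k : α) (f : ι → M) :
    ∑ j ∈ s with g j < k, f j + ∑ j ∈ s with k ≤ g j, f j = ∑ j ∈ s, f j := by
  simpa only [not_lt] using Finset.sum_filter_add_sum_filter_not s (g · < k) f

theorem posSemidef_sum_smul_vecMulVec_self {ι n : Type*} [Fintype n] (s : Finset ι)
    {lam : ι → ℝ} (hlam : ∀ j ∈ s, 0 ≤ lam j) (v : ι → n → ℝ) :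
    (∑ j ∈ s, lam j • vecMulVec (v j) (v j)).PosSemidef :=
  posSemidef_sum s fun j hj => (posSemidef_vecMulVec_self_star (v j)).smul (hlam j hj)

section Congruence

variable {n K : Type*} [Fintype n] [DecidableEq n] [Field K] {L : Matrix n n K}

theorem transpose_mul_mul_eq_of_inv_transpose_mul_mul_inv_eq (hL : IsUnit L.det)
    {M H : Matrix n n K} (h : L⁻¹ᵀ * M * L⁻¹ = H) : Lᵀ * H * L = M := by
  have hLt : Lᵀ * L⁻¹ᵀ = 1 := by rw [← transpose_mul, nonsing_inv_mul _ hL, transpose_one]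
  rw [← h, Matrix.mul_assoc, Matrix.mul_assoc, nonsing_inv_mul _ hL, Matrix.mul_one,
    ← Matrix.mul_assoc, hLt, Matrix.one_mul]

theorem inv_inv_mul_inv_mul_inv_transpose (hL : IsUnit L.det) {B : Matrix n n K}
    (hB : IsUnit B.det) : (L⁻¹ * B⁻¹ * L⁻¹ᵀ)⁻¹ = Lᵀ * B * L := by
  rw [Matrix.mul_inv_rev, Matrix.mul_inv_rev, transpose_nonsing_inv,
    nonsing_inv_nonsing_inv _ (isUnit_det_transpose _ hL), nonsing_inv_nonsing_inv _ hB,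
    nonsing_inv_nonsing_inv _ hL, Matrix.mul_assoc]

end Congruence

theorem posDef_transpose_mul_self_of_isUnit_det {n : Type*} [Fintype n] [DecidableEq n]
    {L : Matrix n n ℝ} (hL : IsUnit L.det) : (Lᵀ * L).PosDef := by
  simpa using PosDef.conjTranspose_mul_self L
    (mulVec_injective_iff_isUnit.mpr ((isUnit_iff_isUnit_det L).mpr hL))

end Matrix

theorem stmt5_general
    (m n : ℕ)
    (A : Matrix (Fin m) (Fin n) ℝ) (L : Matrix (Fin n) (Fin n) ℝ) (hL : IsUnit L.det)
    (μ σ : ℝ) (hμ : 0 < μ) (hσ : 0 < σ)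
    (v : Fin n → Fin n → ℝ) (lam : Fin n → ℝ)
    (hlam_nonneg : ∀ j, 0 ≤ lam j)
    (hHdecomp : (L⁻¹)ᵀ * Aᵀ * A * L⁻¹ = ∑ j, lam j • vecMulVec (v j) (v j))
    (k : ℕ)
    (Γcond : Matrix (Fin n) (Fin n) ℝ)
    (hΓcond : Γcond = (μ • (Aᵀ * A) + σ • (Lᵀ * L))⁻¹)
    (Γhat : Matrix (Fin n) (Fin n) ℝ)
    (hΓhat : Γhat = L⁻¹ * (σ • (1 : Matrix (Fin n) (Fin n) ℝ) +
        μ • ∑ j ∈ Finset.univ.filter (fun j : Fin n => (j : ℕ) < k),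
          lam j • vecMulVec (v j) (v j))⁻¹ * (L⁻¹)ᵀ)
    :
    Γcond⁻¹ - Γhat⁻¹ =
      μ • (Lᵀ * (∑ j ∈ Finset.univ.filter (fun j : Fin n => k ≤ (j : ℕ)), lam j • vecMulVec (v j) (v j)) * L) ∧
    (Γcond⁻¹ - Γhat⁻¹).PosSemidef := by
  set Hlo := ∑ j ∈ Finset.univ.filter (fun j : Fin n => (j : ℕ) < k),
    lam j • vecMulVec (v j) (v j)
  set Hhi := ∑ j ∈ Finset.univ.filter (fun j : Fin n => k ≤ (j : ℕ)),
    lam j • vecMulVec (v j) (v j)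
  have hAA : Lᵀ * (Hlo + Hhi) * L = Aᵀ * A := by
    refine transpose_mul_mul_eq_of_inv_transpose_mul_mul_inv_eq hL ?_
    rw [← Matrix.mul_assoc, hHdecomp,
      ← sum_filter_lt_add_sum_filter_le _ (fun j : Fin n => (j : ℕ)) k]
  have hcond : (μ • (Aᵀ * A) + σ • (Lᵀ * L)).PosDef :=
    PosDef.posSemidef_add ((posSemidef_conjTranspose_mul_self A).smul hμ.le)
      ((posDef_transpose_mul_self_of_isUnit_det hL).smul hσ)
  have hB : (σ • (1 : Matrix (Fin n) (Fin n) ℝ) + μ • Hlo).PosDef :=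
    (PosDef.one.smul hσ).add_posSemidef
      ((posSemidef_sum_smul_vecMulVec_self _ (fun j _ => hlam_nonneg j) v).smul hμ.le)
  have hdiff : Γcond⁻¹ - Γhat⁻¹ = μ • (Lᵀ * Hhi * L) := by
    rw [hΓcond, hΓhat, nonsing_inv_nonsing_inv _ ((isUnit_iff_isUnit_det _).mp hcond.isUnit),
      inv_inv_mul_inv_mul_inv_transpose hL ((isUnit_iff_isUnit_det _).mp hB.isUnit), ← hAA]
    simp only [Matrix.mul_add, Matrix.add_mul, Matrix.mul_smul, Matrix.smul_mul,
      Matrix.mul_one, smul_add]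
    abel
  have hHhi : Hhi.PosSemidef :=
    posSemidef_sum_smul_vecMulVec_self _ (fun j _ => hlam_nonneg j) v
  refine ⟨hdiff, hdiff ▸ ?_⟩
  simpa using (hHhi.conjTranspose_mul_mul_same L).smul hμ.le

theorem stmt5
    (m n : ℕ) (hm : 0 < m) (hn : 0 < n)
    (A : Matrix (Fin m) (Fin n) ℝ) (L : Matrix (Fin n) (Fin n) ℝ) (hL : IsUnit L.det)
    (μ σ : ℝ) (hμ : 0 < μ) (hσ : 0 < σ)
    (v : Fin n → Fin n → ℝ) (lam : Fin n → ℝ)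
    (horth : ∀ i j, v i ⬝ᵥ v j = if i = j then (1 : ℝ) else 0)
    (hlam_nonneg : ∀ j, 0 ≤ lam j) (hlam_anti : Antitone lam)
    (hHdecomp : (L⁻¹)ᵀ * Aᵀ * A * L⁻¹ = ∑ j, lam j • vecMulVec (v j) (v j))
    (k : ℕ) (hk : k ≤ n)
    (Γcond : Matrix (Fin n) (Fin n) ℝ)
    (hΓcond : Γcond = (μ • (Aᵀ * A) + σ • (Lᵀ * L))⁻¹)
    (Γhat : Matrix (Fin n) (Fin n) ℝ)
    (hΓhat : Γhat = L⁻¹ * (σ • (1 : Matrix (Fin n) (Fin n) ℝ) +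
        μ • ∑ j ∈ Finset.univ.filter (fun j : Fin n => (j : ℕ) < k),
          lam j • vecMulVec (v j) (v j))⁻¹ * (L⁻¹)ᵀ)
    :
    Γcond⁻¹ - Γhat⁻¹ =
      μ • (Lᵀ * (∑ j ∈ Finset.univ.filter (fun j : Fin n => k ≤ (j : ℕ)), lam j • vecMulVec (v j) (v j)) * L) ∧
    (Γcond⁻¹ - Γhat⁻¹).PosSemidef :=
  stmt5_general m n A L hL μ σ hμ hσ v lam hlam_nonneg hHdecomp k Γcond hΓcond Γhat hΓhat
end
end

section
/- (Proposition 2) For all x, z ∈ ℝ^n, the acceptance ratio of the low-rank independence sampler can be expressed as η(z, x) = exp(−(μ/2) Σ_{j=k+1}^n λ_j [ (v_jᵀ L z)² − (v_jᵀ L x)² ]). -/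
open Matrix MeasureTheory ProbabilityTheory Finset

noncomputable section

/-!
Write `H = ∑ⱼ λⱼ vⱼ vⱼᵀ` and `Hₖ` for the part of this sum with `j < k`. The hypothesis on `H`
gives `Γ_cond⁻¹ = Lᵀ (σ I + μ H) L` and by definition `Γ̂_cond⁻¹ = Lᵀ (σ I + μ Hₖ) L`; both inner
matrices are positive definite, so these inverses of inverses are not junk values. Hence
`Γ_cond⁻¹ - Γ̂_cond⁻¹ = μ Lᵀ (H - Hₖ) L`, whose quadratic form at `x` is
`μ ∑_{j ≥ k} λⱼ (vⱼᵀ L x)²`, and the ratio of the two Gaussian weights is the exponential of the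
difference of these quadratic forms.
-/

namespace Matrix

variable {ι κ : Type*} [Fintype ι]

theorem dotProduct_sum_smul_vecMulVec_mulVec {R : Type*} [CommSemiring R] (c : κ → R)
    (v : κ → ι → R) (s : Finset κ) (y : ι → R) :
    y ⬝ᵥ ((∑ j ∈ s, c j • vecMulVec (v j) (v j)) *ᵥ y) = ∑ j ∈ s, c j * (v j ⬝ᵥ y) ^ 2 := by
  simp only [sum_mulVec, dotProduct_sum, smul_mulVec, dotProduct_smul, vecMulVec_mulVec,
    op_smul_eq_smul, smul_eq_mul, dotProduct_comm y (v _)]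
  exact sum_congr rfl fun j _ => by ring

theorem dotProduct_transpose_mul_mul_mulVec {R : Type*} [CommSemiring R] (L X : Matrix ι ι R)
    (y : ι → R) : y ⬝ᵥ ((Lᵀ * X * L) *ᵥ y) = (L *ᵥ y) ⬝ᵥ (X *ᵥ (L *ᵥ y)) := by
  rw [Matrix.mul_assoc, ← mulVec_mulVec, dotProduct_mulVec, vecMul_transpose, mulVec_mulVec]

theorem posDef_smul_one_add_smul_sum_smul_vecMulVec [DecidableEq ι] {σ μ : ℝ} (hσ : 0 < σ)
    (hμ : 0 ≤ μ) {c : κ → ℝ} {s : Finset κ} (hc : ∀ j ∈ s, 0 ≤ c j) (v : κ → ι → ℝ) :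
    (σ • (1 : Matrix ι ι ℝ) + μ • ∑ j ∈ s, c j • vecMulVec (v j) (v j)).PosDef := by
  refine (PosDef.one.smul hσ).add_posSemidef (PosSemidef.smul ?_ hμ)
  exact posSemidef_sum s fun j hj => (posSemidef_vecMulVec_self_star (v j)).smul (hc j hj)

variable [DecidableEq ι] {K : Type*} [CommRing K]

theorem transpose_mul_mul_inv_inv {L P : Matrix ι ι K} (hL : IsUnit L.det) (hP : IsUnit P.det) :
    (Lᵀ * P * L)⁻¹⁻¹ = Lᵀ * P * L :=
  nonsing_inv_nonsing_inv _ <| by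
    simpa only [det_mul, det_transpose] using (hL.mul hP).mul hL

theorem inv_mul_inv_mul_transpose_inv_inv {L P : Matrix ι ι K} (hL : IsUnit L.det)
    (hP : IsUnit P.det) : (L⁻¹ * P⁻¹ * (L⁻¹)ᵀ)⁻¹ = Lᵀ * P * L := by
  rw [mul_inv_rev, mul_inv_rev, nonsing_inv_nonsing_inv _ hP, nonsing_inv_nonsing_inv _ hL,
    transpose_nonsing_inv, nonsing_inv_nonsing_inv _ (by rwa [det_transpose]), Matrix.mul_assoc]

theorem eq_transpose_mul_mul_of_inv_transpose_mul_mul_inv {L B H : Matrix ι ι K}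
    (hL : IsUnit L.det) (h : (L⁻¹)ᵀ * B * L⁻¹ = H) : B = Lᵀ * H * L := by
  have hLL : L⁻¹ * L = 1 := nonsing_inv_mul L hL
  rw [← h, ← Matrix.mul_assoc, ← Matrix.mul_assoc, ← transpose_mul, hLL, transpose_one,
    Matrix.one_mul, Matrix.mul_assoc, hLL, Matrix.mul_one]

end Matrix

theorem stmt6_general
    (m n : ℕ)
    (A : Matrix (Fin m) (Fin n) ℝ) (L : Matrix (Fin n) (Fin n) ℝ) (hL : IsUnit L.det)
    (μ σ : ℝ) (hμ : 0 < μ) (hσ : 0 < σ)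
    (v : Fin n → Fin n → ℝ) (lam : Fin n → ℝ)
    (hlam_nonneg : ∀ j, 0 ≤ lam j)
    (hHdecomp : (L⁻¹)ᵀ * Aᵀ * A * L⁻¹ = ∑ j, lam j • vecMulVec (v j) (v j))
    (k : ℕ)
    (Γcond : Matrix (Fin n) (Fin n) ℝ)
    (hΓcond : Γcond = (μ • (Aᵀ * A) + σ • (Lᵀ * L))⁻¹)
    (Γhat : Matrix (Fin n) (Fin n) ℝ)
    (hΓhat : Γhat = L⁻¹ * (σ • (1 : Matrix (Fin n) (Fin n) ℝ) +
        μ • ∑ j ∈ Finset.univ.filter (fun j : Fin n => (j : ℕ) < k),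
          lam j • vecMulVec (v j) (v j))⁻¹ * (L⁻¹)ᵀ)
    (w : (Fin n → ℝ) → ℝ)
    (hw : ∀ x, w x = Real.exp (-(1/2) * (x ⬝ᵥ ((Γcond⁻¹ - Γhat⁻¹) *ᵥ x))))
    (η : (Fin n → ℝ) → (Fin n → ℝ) → ℝ)
    (hη : ∀ z x, η z x = w z / w x)
    :
    ∀ x z : Fin n → ℝ,
      η z x = Real.exp (-(μ / 2) * ∑ j ∈ Finset.univ.filter (fun j : Fin n => k ≤ (j : ℕ)),
        lam j * ((v j ⬝ᵥ (L *ᵥ z)) ^ 2 - (v j ⬝ᵥ (L *ᵥ x)) ^ 2)) := by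
  set S : Finset (Fin n) → Matrix (Fin n) (Fin n) ℝ :=
    fun s => ∑ j ∈ s, lam j • vecMulVec (v j) (v j) with hS
  have hpd : ∀ s, (σ • 1 + μ • S s).PosDef := fun s =>
    posDef_smul_one_add_smul_sum_smul_vecMulVec hσ hμ.le (fun j _ => hlam_nonneg j) v
  have hcond : Γcond⁻¹ = Lᵀ * (σ • 1 + μ • S univ) * L := by
    have hAA := eq_transpose_mul_mul_of_inv_transpose_mul_mul_inv (B := Aᵀ * A) (H := S univ) hL
      (by rw [← Matrix.mul_assoc]; exact hHdecomp)
    have hM : μ • (Aᵀ * A) + σ • (Lᵀ * L) = Lᵀ * (σ • 1 + μ • S univ) * L := by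
      rw [hAA, Matrix.mul_add, Matrix.add_mul, Matrix.mul_smul, Matrix.smul_mul,
        Matrix.mul_smul, Matrix.smul_mul, Matrix.mul_one, add_comm]
    rw [hΓcond, hM, transpose_mul_mul_inv_inv hL (hpd univ).det_pos.ne'.isUnit]
  have hhat : Γhat⁻¹ = Lᵀ * (σ • 1 + μ • S {j | (j : ℕ) < k}) * L := by
    rw [hΓhat, inv_mul_inv_mul_transpose_inv_inv hL (hpd _).det_pos.ne'.isUnit]
  have hsplit : S univ = S {j | (j : ℕ) < k} + S {j | k ≤ (j : ℕ)} := by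
    simp only [hS, ← not_lt]
    exact (sum_filter_add_sum_filter_not univ _ _).symm
  have hquad (y : Fin n → ℝ) : y ⬝ᵥ ((Γcond⁻¹ - Γhat⁻¹) *ᵥ y) =
      μ * ∑ j ∈ univ.filter (fun j : Fin n => k ≤ (j : ℕ)), lam j * (v j ⬝ᵥ (L *ᵥ y)) ^ 2 := by
    rw [hcond, hhat, ← Matrix.sub_mul, ← Matrix.mul_sub, hsplit, add_sub_add_left_eq_sub,
      ← smul_sub, add_sub_cancel_left, dotProduct_transpose_mul_mul_mulVec, smul_mulVec,
      dotProduct_smul, dotProduct_sum_smul_vecMulVec_mulVec, smul_eq_mul]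
  intro x z
  rw [hη, hw, hw, ← Real.exp_sub, hquad, hquad]
  simp only [mul_sub, sum_sub_distrib]
  ring_nf

theorem stmt6
    (m n : ℕ) (hm : 0 < m) (hn : 0 < n)
    (A : Matrix (Fin m) (Fin n) ℝ) (L : Matrix (Fin n) (Fin n) ℝ) (hL : IsUnit L.det)
    (μ σ : ℝ) (hμ : 0 < μ) (hσ : 0 < σ)
    (v : Fin n → Fin n → ℝ) (lam : Fin n → ℝ)
    (horth : ∀ i j, v i ⬝ᵥ v j = if i = j then (1 : ℝ) else 0)
    (hlam_nonneg : ∀ j, 0 ≤ lam j) (hlam_anti : Antitone lam)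
    (hHdecomp : (L⁻¹)ᵀ * Aᵀ * A * L⁻¹ = ∑ j, lam j • vecMulVec (v j) (v j))
    (k : ℕ) (hk : k ≤ n)
    (Γcond : Matrix (Fin n) (Fin n) ℝ)
    (hΓcond : Γcond = (μ • (Aᵀ * A) + σ • (Lᵀ * L))⁻¹)
    (Γhat : Matrix (Fin n) (Fin n) ℝ)
    (hΓhat : Γhat = L⁻¹ * (σ • (1 : Matrix (Fin n) (Fin n) ℝ) +
        μ • ∑ j ∈ Finset.univ.filter (fun j : Fin n => (j : ℕ) < k),
          lam j • vecMulVec (v j) (v j))⁻¹ * (L⁻¹)ᵀ)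
    (w : (Fin n → ℝ) → ℝ)
    (hw : ∀ x, w x = Real.exp (-(1/2) * (x ⬝ᵥ ((Γcond⁻¹ - Γhat⁻¹) *ᵥ x))))
    (η : (Fin n → ℝ) → (Fin n → ℝ) → ℝ)
    (hη : ∀ z x, η z x = w z / w x)
    :
    ∀ x z : Fin n → ℝ,
      η z x = Real.exp (-(μ / 2) * ∑ j ∈ Finset.univ.filter (fun j : Fin n => k ≤ (j : ℕ)),
        lam j * ((v j ⬝ᵥ (L *ᵥ z)) ^ 2 - (v j ⬝ᵥ (L *ᵥ x)) ^ 2)) :=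
  stmt6_general m n A L hL μ σ hμ hσ v lam hlam_nonneg hHdecomp k Γcond hΓcond Γhat hΓhat w hw η hη
end
end

section
/- If x, z ∈ ℝ^n are such that for every j ∈ {k+1, …, n} either v_jᵀ L (z + x) = 0 or v_jᵀ L (z − x) = 0, then the acceptance ratio satisfies η(z, x) = 1. -/
open Matrix MeasureTheory ProbabilityTheory Finset

noncomputable section

lemma myDot_sum {n : ℕ} {ι : Type*} (s : Finset ι) (x : Fin n → ℝ) (f : ι → Fin n → ℝ) :
    x ⬝ᵥ (∑ i ∈ s, f i) = ∑ i ∈ s, x ⬝ᵥ f i := by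
  induction s using Finset.cons_induction with
  | empty => simp
  | cons i s hi ih => simp [Finset.sum_cons, dotProduct_add, ih]

lemma myVV {n : ℕ} (u x y : Fin n → ℝ) :
    x ⬝ᵥ (vecMulVec u u *ᵥ y) = (u ⬝ᵥ x) * (u ⬝ᵥ y) := by
  simp only [dotProduct, mulVec, vecMulVec_apply, Finset.mul_sum, Finset.sum_mul]
  rw [Finset.sum_comm]
  exact Finset.sum_congr rfl fun i _ => Finset.sum_congr rfl fun j _ => by ring

lemma mySum_mulVec {n : ℕ} {ι : Type*} (s : Finset ι) (M : ι → Matrix (Fin n) (Fin n) ℝ)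
    (a : Fin n → ℝ) : (∑ i ∈ s, M i) *ᵥ a = ∑ i ∈ s, M i *ᵥ a := by
  induction s using Finset.cons_induction with
  | empty => simp [Matrix.zero_mulVec]
  | cons i s hi ih => simp [Finset.sum_cons, Matrix.add_mulVec, ih]

lemma myQuad {m n : ℕ} (B : Matrix (Fin m) (Fin n) ℝ) (C : Matrix (Fin m) (Fin n) ℝ)
    (x y : Fin n → ℝ) : x ⬝ᵥ ((Bᵀ * C) *ᵥ y) = (B *ᵥ x) ⬝ᵥ (C *ᵥ y) := by
  rw [← Matrix.mulVec_mulVec, Matrix.dotProduct_mulVec, Matrix.vecMul_transpose]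

lemma myQuadSum {n : ℕ} (v : Fin n → Fin n → ℝ) (lam : Fin n → ℝ) (s : Finset (Fin n))
    (x y : Fin n → ℝ) :
    x ⬝ᵥ ((∑ j ∈ s, lam j • vecMulVec (v j) (v j)) *ᵥ y)
      = ∑ j ∈ s, lam j * ((v j ⬝ᵥ x) * (v j ⬝ᵥ y)) := by
  rw [mySum_mulVec, myDot_sum]
  refine Finset.sum_congr rfl fun j _ => ?_
  rw [smul_mulVec, dotProduct_smul, myVV, smul_eq_mul]

lemma myUnit {n : ℕ} (M : Matrix (Fin n) (Fin n) ℝ)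
    (h : ∀ x : Fin n → ℝ, x ≠ 0 → x ⬝ᵥ (M *ᵥ x) ≠ 0) : IsUnit M.det := by
  rw [isUnit_iff_ne_zero]
  intro hd
  obtain ⟨x, hx, hMx⟩ := (Matrix.exists_mulVec_eq_zero_iff).2 hd
  exact h x hx (by rw [hMx, dotProduct_zero])

lemma myDotSelf_nonneg {n : ℕ} (x : Fin n → ℝ) : 0 ≤ x ⬝ᵥ x :=
  Finset.sum_nonneg fun i _ => mul_self_nonneg (x i)

theorem stmt8
    (m n : ℕ) (hm : 0 < m) (hn : 0 < n)
    (A : Matrix (Fin m) (Fin n) ℝ) (L : Matrix (Fin n) (Fin n) ℝ) (hL : IsUnit L.det)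
    (μ σ : ℝ) (hμ : 0 < μ) (hσ : 0 < σ)
    (v : Fin n → Fin n → ℝ) (lam : Fin n → ℝ)
    (horth : ∀ i j, v i ⬝ᵥ v j = if i = j then (1 : ℝ) else 0)
    (hlam_nonneg : ∀ j, 0 ≤ lam j) (hlam_anti : Antitone lam)
    (hHdecomp : (L⁻¹)ᵀ * Aᵀ * A * L⁻¹ = ∑ j, lam j • vecMulVec (v j) (v j))
    (k : ℕ) (hk : k ≤ n)
    (Γcond : Matrix (Fin n) (Fin n) ℝ)
    (hΓcond : Γcond = (μ • (Aᵀ * A) + σ • (Lᵀ * L))⁻¹)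
    (Γhat : Matrix (Fin n) (Fin n) ℝ)
    (hΓhat : Γhat = L⁻¹ * (σ • (1 : Matrix (Fin n) (Fin n) ℝ) +
        μ • ∑ j ∈ Finset.univ.filter (fun j : Fin n => (j : ℕ) < k),
          lam j • vecMulVec (v j) (v j))⁻¹ * (L⁻¹)ᵀ)
    (w : (Fin n → ℝ) → ℝ)
    (hw : ∀ x, w x = Real.exp (-(1/2) * (x ⬝ᵥ ((Γcond⁻¹ - Γhat⁻¹) *ᵥ x))))
    (η : (Fin n → ℝ) → (Fin n → ℝ) → ℝ)
    (hη : ∀ z x, η z x = w z / w x)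
    :
    ∀ x z : Fin n → ℝ,
      (∀ j ∈ Finset.univ.filter (fun j : Fin n => k ≤ (j : ℕ)),
        v j ⬝ᵥ (L *ᵥ (z + x)) = 0 ∨ v j ⬝ᵥ (L *ᵥ (z - x)) = 0) →
      η z x = 1 := by
  intro x z hyp
  -- basic invertibility facts
  have hLi : L⁻¹ * L = 1 := Matrix.nonsing_inv_mul L hL
  have hLT : IsUnit (Lᵀ).det := by rwa [Matrix.det_transpose]
  have hLinj : ∀ y : Fin n → ℝ, L *ᵥ y = 0 → y = 0 := by
    intro y hy
    have : L⁻¹ *ᵥ (L *ᵥ y) = y := by rw [Matrix.mulVec_mulVec, hLi, Matrix.one_mulVec]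
    rw [hy, Matrix.mulVec_zero] at this
    exact this.symm
  -- A^T A = L^T * (sum) * L
  set Sall : Matrix (Fin n) (Fin n) ℝ := ∑ j, lam j • vecMulVec (v j) (v j) with hSall
  have e1 : Lᵀ * (L⁻¹)ᵀ = 1 := by rw [← Matrix.transpose_mul, hLi, Matrix.transpose_one]
  have hAA : Aᵀ * A = Lᵀ * Sall * L := by
    rw [← hHdecomp]
    calc Aᵀ * A = (Lᵀ * (L⁻¹)ᵀ) * (Aᵀ * A) * (L⁻¹ * L) := by
          rw [e1, hLi, Matrix.one_mul, Matrix.mul_one]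
      _ = Lᵀ * ((L⁻¹)ᵀ * Aᵀ * A * L⁻¹) * L := by simp only [Matrix.mul_assoc]
  -- the truncated sum
  set S : Matrix (Fin n) (Fin n) ℝ :=
    ∑ j ∈ Finset.univ.filter (fun j : Fin n => (j : ℕ) < k), lam j • vecMulVec (v j) (v j) with hS
  set M : Matrix (Fin n) (Fin n) ℝ := σ • (1 : Matrix (Fin n) (Fin n) ℝ) + μ • S with hM
  -- quadratic forms
  have hMq : ∀ y : Fin n → ℝ, y ⬝ᵥ (M *ᵥ y)
      = σ * (y ⬝ᵥ y) + μ * ∑ j ∈ Finset.univ.filter (fun j : Fin n => (j : ℕ) < k),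
          lam j * ((v j ⬝ᵥ y) * (v j ⬝ᵥ y)) := by
    intro y
    rw [hM, Matrix.add_mulVec, dotProduct_add, smul_mulVec, smul_mulVec,
      dotProduct_smul, dotProduct_smul, Matrix.one_mulVec, myQuadSum, smul_eq_mul, smul_eq_mul]
  have hMunit : IsUnit M.det := by
    apply myUnit
    intro y hy
    rw [hMq]
    have h1 : 0 < y ⬝ᵥ y :=
      lt_of_le_of_ne (myDotSelf_nonneg y) (fun h => hy (dotProduct_self_eq_zero.mp h.symm))
    have h2 : 0 ≤ ∑ j ∈ Finset.univ.filter (fun j : Fin n => (j : ℕ) < k),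
        lam j * ((v j ⬝ᵥ y) * (v j ⬝ᵥ y)) :=
      Finset.sum_nonneg fun j _ => mul_nonneg (hlam_nonneg j) (mul_self_nonneg _)
    positivity
  -- Γhat⁻¹ = Lᵀ * (M * L)
  have hΓhatInv : Γhat⁻¹ = Lᵀ * (M * L) := by
    rw [hΓhat, Matrix.transpose_nonsing_inv, Matrix.mul_inv_rev, Matrix.mul_inv_rev,
      Matrix.nonsing_inv_nonsing_inv _ hLT, Matrix.nonsing_inv_nonsing_inv _ hMunit,
      Matrix.nonsing_inv_nonsing_inv _ hL]
  -- Γcond⁻¹ = μ • (AᵀA) + σ • (LᵀL)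
  set N : Matrix (Fin n) (Fin n) ℝ := μ • (Aᵀ * A) + σ • (Lᵀ * L) with hN
  have hNq : ∀ y : Fin n → ℝ, y ⬝ᵥ (N *ᵥ y)
      = μ * ((A *ᵥ y) ⬝ᵥ (A *ᵥ y)) + σ * ((L *ᵥ y) ⬝ᵥ (L *ᵥ y)) := by
    intro y
    rw [hN, Matrix.add_mulVec, dotProduct_add, smul_mulVec, smul_mulVec,
      dotProduct_smul, dotProduct_smul, myQuad, myQuad, smul_eq_mul, smul_eq_mul]
  have hNunit : IsUnit N.det := by
    apply myUnit
    intro y hy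
    rw [hNq]
    have hLy : L *ᵥ y ≠ 0 := fun h => hy (hLinj y h)
    have h1 : 0 < (L *ᵥ y) ⬝ᵥ (L *ᵥ y) :=
      lt_of_le_of_ne (myDotSelf_nonneg _) (fun h => hLy (dotProduct_self_eq_zero.mp h.symm))
    have h2 : 0 ≤ (A *ᵥ y) ⬝ᵥ (A *ᵥ y) := myDotSelf_nonneg _
    positivity
  have hΓcondInv : Γcond⁻¹ = N := by
    rw [hΓcond, Matrix.nonsing_inv_nonsing_inv _ hNunit]
  -- the key quadratic form formula
  have hqf : ∀ y : Fin n → ℝ, y ⬝ᵥ ((Γcond⁻¹ - Γhat⁻¹) *ᵥ y)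
      = μ * ∑ j ∈ Finset.univ.filter (fun j : Fin n => k ≤ (j : ℕ)),
          lam j * ((v j ⬝ᵥ (L *ᵥ y)) * (v j ⬝ᵥ (L *ᵥ y))) := by
    intro y
    rw [Matrix.sub_mulVec, dotProduct_sub, hΓcondInv, hΓhatInv]
    have hterm2 : y ⬝ᵥ ((Lᵀ * (M * L)) *ᵥ y) = (L *ᵥ y) ⬝ᵥ (M *ᵥ (L *ᵥ y)) := by
      rw [myQuad, Matrix.mulVec_mulVec]
    have hterm1 : y ⬝ᵥ (N *ᵥ y)
        = μ * ((L *ᵥ y) ⬝ᵥ (Sall *ᵥ (L *ᵥ y))) + σ * ((L *ᵥ y) ⬝ᵥ (L *ᵥ y)) := by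
      rw [hNq]
      congr 2
      rw [← myQuad A A y y, hAA, Matrix.mul_assoc, myQuad, Matrix.mulVec_mulVec]
    rw [hterm1, hterm2, hMq, hSall, myQuadSum]
    have hsplit : ∑ j, lam j * ((v j ⬝ᵥ (L *ᵥ y)) * (v j ⬝ᵥ (L *ᵥ y)))
        = (∑ j ∈ Finset.univ.filter (fun j : Fin n => (j : ℕ) < k),
            lam j * ((v j ⬝ᵥ (L *ᵥ y)) * (v j ⬝ᵥ (L *ᵥ y))))
          + ∑ j ∈ Finset.univ.filter (fun j : Fin n => k ≤ (j : ℕ)),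
            lam j * ((v j ⬝ᵥ (L *ᵥ y)) * (v j ⬝ᵥ (L *ᵥ y))) := by
      rw [← Finset.sum_filter_add_sum_filter_not Finset.univ (fun j : Fin n => (j : ℕ) < k)]
      congr 1
      apply Finset.sum_congr _ (fun _ _ => rfl)
      apply Finset.filter_congr
      intro j _
      simp [not_lt]
    rw [hsplit]
    ring
  -- the two quadratic forms agree
  have hkey : z ⬝ᵥ ((Γcond⁻¹ - Γhat⁻¹) *ᵥ z) = x ⬝ᵥ ((Γcond⁻¹ - Γhat⁻¹) *ᵥ x) := by
    rw [hqf, hqf]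
    congr 1
    apply Finset.sum_congr rfl
    intro j hj
    have hfac : ∀ u₁ u₂ : ℝ, u₁ + u₂ = 0 ∨ u₁ - u₂ = 0 → u₁ * u₁ = u₂ * u₂ := by
      rintro u₁ u₂ (h | h)
      · have : u₁ = -u₂ := by linarith
        rw [this]; ring
      · have : u₁ = u₂ := by linarith
        rw [this]
    congr 1
    apply hfac
    have hadd : v j ⬝ᵥ (L *ᵥ (z + x)) = v j ⬝ᵥ (L *ᵥ z) + v j ⬝ᵥ (L *ᵥ x) := by
      rw [Matrix.mulVec_add, dotProduct_add]
    have hsub : v j ⬝ᵥ (L *ᵥ (z - x)) = v j ⬝ᵥ (L *ᵥ z) - v j ⬝ᵥ (L *ᵥ x) := by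
      rw [Matrix.mulVec_sub, dotProduct_sub]
    rcases hyp j hj with h | h
    · left; rw [← hadd]; exact h
    · right; rw [← hsub]; exact h
  rw [hη, hw, hw, hkey, div_self (Real.exp_ne_zero _)]
end
end

section
/- (Lemma on moments) For every positive integer ℓ and every x ∈ ℝ^n, the ℓ-th moment of the acceptance ratio with respect to the proposal distribution satisfies ∫_{ℝ^n} η(z, x)^ℓ g(z) dz = 1/(N_ℓ · w(x)^ℓ); equivalently, ∫_{ℝ^n} w(z)^ℓ g(z) dz = 1/N_ℓ. -/
/-!
Let `V` be the matrix with rows `v j` and `K = V L`. Then `Γ̂⁻¹ = Kᵀ diag(d) K` and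
`Γ_cond⁻¹ = Kᵀ diag(σ + μ λ) K`, where `d j = σ + μ λ j` for `j < k` and `d j = σ` otherwise.
In the coordinates `y = K z` both quadratic forms in `w(z)^ℓ g(z)` are therefore diagonal, `K x̂`
has coordinates `c j = μ (d j)⁻¹ bᵀ A L⁻¹ v j`, and the integral factors into one-dimensional
integrals `∫ exp(-½ (a j y² + d j (y - c j)²))`, with `a j = ℓ μ λ j` for `j ≥ k` and `a j = 0`
otherwise, each computed by completing the square. The factors with `j < k` equal `1`; the others
are the factors of `1 / N_ℓ`.
-/

open Matrix MeasureTheory ProbabilityTheory Finset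

noncomputable section

section

variable {ι κ R : Type*} [Fintype ι] [DecidableEq ι] [Fintype κ] [CommRing R]

theorem of_mul_transpose_of_eq_one {v : ι → ι → R}
    (horth : ∀ i j, v i ⬝ᵥ v j = if i = j then (1 : R) else 0) :
    of v * (of v)ᵀ = 1 := by
  ext i j
  simpa [mul_apply, one_apply, dotProduct] using horth i j

theorem sum_smul_vecMulVec_eq_transpose_mul_diagonal_mul (v : ι → ι → R) (c : ι → R) :
    ∑ j, c j • vecMulVec (v j) (v j) = (of v)ᵀ * diagonal c * of v := by
  ext p q
  simp only [Matrix.sum_apply, Matrix.smul_apply, vecMulVec_apply, mul_apply, transpose_apply,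
    of_apply, diagonal_apply, smul_eq_mul, mul_ite, mul_zero, sum_ite_eq', mem_univ, if_true]
  exact sum_congr rfl fun j _ => by ring

theorem smul_one_add_smul_transpose_mul_diagonal_mul {V : Matrix ι ι R} (hV : Vᵀ * V = 1)
    (σ μ : R) (c : ι → R) :
    σ • (1 : Matrix ι ι R) + μ • (Vᵀ * diagonal c * V)
      = Vᵀ * diagonal (fun j => σ + μ * c j) * V := by
  have hdiag : diagonal (fun j => σ + μ * c j) = σ • 1 + μ • diagonal c := by
    ext i j; by_cases h : i = j <;> simp [one_apply, h]
  rw [hdiag, Matrix.mul_add, Matrix.add_mul, Matrix.mul_smul, Matrix.smul_mul, Matrix.mul_one, hV,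
    Matrix.mul_smul, Matrix.smul_mul, Matrix.mul_assoc]

theorem inv_transpose_mul_mul (L B : Matrix ι ι R) :
    (Lᵀ * B * L)⁻¹ = L⁻¹ * B⁻¹ * (L⁻¹)ᵀ := by
  rw [Matrix.mul_inv_rev, Matrix.mul_inv_rev, transpose_nonsing_inv, Matrix.mul_assoc]

theorem det_transpose_mul_diagonal_mul (K : Matrix ι ι R) (d : ι → R) :
    (Kᵀ * diagonal d * K).det = K.det ^ 2 * ∏ j, d j := by
  rw [det_mul, det_mul, det_transpose, det_diagonal]; ring

theorem dotProduct_transpose_mul_diagonal_mul_mulVec (K : Matrix ι ι R) (a z : ι → R) :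
    z ⬝ᵥ ((Kᵀ * diagonal a * K) *ᵥ z) = ∑ j, a j * (K *ᵥ z) j ^ 2 := by
  rw [← mulVec_mulVec, ← mulVec_mulVec, dotProduct_mulVec, vecMul_transpose, dotProduct]
  simp only [mulVec_diagonal]
  exact sum_congr rfl fun j _ => by ring

theorem inv_inv_transpose_mul_diagonal_mul {K : Matrix ι ι ℝ} (hK : K.det ≠ 0) {d : ι → ℝ}
    (hd : ∀ j, d j ≠ 0) :
    (Kᵀ * diagonal d * K)⁻¹⁻¹ = Kᵀ * diagonal d * K := by
  refine nonsing_inv_nonsing_inv _ (isUnit_iff_ne_zero.2 ?_)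
  rw [det_transpose_mul_diagonal_mul]
  exact mul_ne_zero (pow_ne_zero 2 hK) (prod_ne_zero_iff.2 fun j _ => hd j)

theorem mulVec_inv_transpose_mul_diagonal_mul_mulVec {K : Matrix ι ι ℝ} (hK : IsUnit K.det)
    {d : ι → ℝ} (hd : ∀ j, d j ≠ 0) (u : ι → ℝ) :
    K *ᵥ ((Kᵀ * diagonal d * K)⁻¹ *ᵥ u) = fun j => (d j)⁻¹ * ((Kᵀ)⁻¹ *ᵥ u) j := by
  have hdinv : (diagonal d)⁻¹ = diagonal fun j => (d j)⁻¹ :=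
    inv_eq_left_inv (by simp [diagonal_mul_diagonal, inv_mul_cancel₀ (hd _)])
  rw [Matrix.mul_inv_rev, Matrix.mul_inv_rev, mulVec_mulVec, ← Matrix.mul_assoc,
    mul_nonsing_inv K hK, Matrix.one_mul, ← mulVec_mulVec, hdinv]
  funext j
  rw [mulVec_diagonal]

theorem integral_comp_mulVec {E : Type*} [NormedAddCommGroup E] [NormedSpace ℝ E]
    {K : Matrix ι ι ℝ} (hK : K.det ≠ 0) (f : (ι → ℝ) → E) :
    ∫ z, f (K *ᵥ z) = |K.det|⁻¹ • ∫ y, f y := by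
  have hdet : LinearMap.det (toLin' K) ≠ 0 := by rwa [LinearMap.det_toLin']
  have hemb : MeasurableEmbedding (toLin' K) :=
    ((toLin' K).equivOfDetNeZero hdet).toContinuousLinearEquiv.toHomeomorph.measurableEmbedding
  have hmap := hemb.integral_map (μ := volume) f
  rw [Real.map_matrix_volume_pi_eq_smul_volume_pi hK, integral_smul_measure,
    ENNReal.toReal_ofReal (by positivity), abs_inv] at hmap
  simpa [toLin'_apply] using hmap.symm

theorem integral_sqrt_mul_exp_sq_add_sq {a d : ℝ} (ha : 0 ≤ a) (hd : 0 < d) (c : ℝ) :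
    ∫ y : ℝ, Real.sqrt (d / (2 * Real.pi)) * Real.exp (-(1 / 2) * (a * y ^ 2 + d * (y - c) ^ 2))
      = Real.sqrt (d / (d + a)) * Real.exp (-(d * a * c ^ 2 / (2 * (d + a)))) := by
  have hda : 0 < d + a := by linarith
  have hsq : ∀ y : ℝ, -(1 / 2) * (a * y ^ 2 + d * (y - c) ^ 2)
      = -((d + a) / 2) * (y - d * c / (d + a)) ^ 2 + -(d * a * c ^ 2 / (2 * (d + a))) := by
    intro y; field_simp; ring
  simp_rw [hsq, Real.exp_add, ← mul_assoc, integral_mul_const, integral_const_mul,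
    integral_sub_right_eq_self (fun y => Real.exp (-((d + a) / 2) * y ^ 2)), integral_gaussian]
  congr 1
  rw [← Real.sqrt_mul (by positivity)]
  congr 1
  field_simp

theorem two_pi_rpow_mul_det_inv_transpose_mul_diagonal_mul_rpow (K : Matrix ι ι ℝ) {d : ι → ℝ}
    (hd : ∀ j, 0 < d j) :
    (2 * Real.pi) ^ (-(Fintype.card ι : ℝ) / 2) * ((Kᵀ * diagonal d * K)⁻¹).det ^ (-(1 : ℝ) / 2)
      = |K.det| * ∏ j, Real.sqrt (d j / (2 * Real.pi)) := by
  have h2π := Real.two_pi_pos.le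
  have hdet : 0 ≤ (Kᵀ * diagonal d * K).det := by
    rw [det_transpose_mul_diagonal_mul]
    exact mul_nonneg (sq_nonneg _) (prod_nonneg fun j _ => (hd j).le)
  have hpi : (2 * Real.pi) ^ (-(Fintype.card ι : ℝ) / 2)
      = ∏ _j : ι, (Real.sqrt (2 * Real.pi))⁻¹ := by
    rw [prod_const, card_univ, Real.sqrt_eq_rpow, ← Real.rpow_neg h2π,
      ← Real.rpow_mul_natCast h2π]
    ring_nf
  rw [det_nonsing_inv, Ring.inverse_eq_inv, neg_div 2 (1 : ℝ), Real.inv_rpow hdet,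
    Real.rpow_neg hdet, inv_inv, ← Real.sqrt_eq_rpow, det_transpose_mul_diagonal_mul,
    Real.sqrt_mul (sq_nonneg _), Real.sqrt_sq_eq_abs, Real.sqrt_prod _ fun j _ => (hd j).le, hpi]
  simp_rw [Real.sqrt_div' _ h2π, div_eq_mul_inv, prod_mul_distrib]
  ring

theorem integral_exp_quadForm_mul_gaussianPDF {K : Matrix ι ι ℝ} (hK : K.det ≠ 0)
    {a d : ι → ℝ} (ha : ∀ j, 0 ≤ a j) (hd : ∀ j, 0 < d j)
    {Γ : Matrix ι ι ℝ} (hΓ : Γ = (Kᵀ * diagonal d * K)⁻¹) (x₀ : ι → ℝ) :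
    ∫ z, Real.exp (-(1 / 2) * (z ⬝ᵥ ((Kᵀ * diagonal a * K) *ᵥ z))) *
        ((2 * Real.pi) ^ (-(Fintype.card ι : ℝ) / 2) * Γ.det ^ (-(1 : ℝ) / 2) *
          Real.exp (-(1 / 2) * ((z - x₀) ⬝ᵥ (Γ⁻¹ *ᵥ (z - x₀)))))
      = ∏ j, Real.sqrt (d j / (d j + a j)) *
          Real.exp (-(d j * a j * (K *ᵥ x₀) j ^ 2 / (2 * (d j + a j)))) := by
  subst hΓ
  set f : ι → ℝ → ℝ := fun j t => Real.sqrt (d j / (2 * Real.pi)) *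
    Real.exp (-(1 / 2) * (a j * t ^ 2 + d j * (t - (K *ᵥ x₀) j) ^ 2))
  have hfactor : ∀ z, Real.exp (-(1 / 2) * (z ⬝ᵥ ((Kᵀ * diagonal a * K) *ᵥ z))) *
        ((2 * Real.pi) ^ (-(Fintype.card ι : ℝ) / 2) *
          (Kᵀ * diagonal d * K)⁻¹.det ^ (-(1 : ℝ) / 2) *
          Real.exp (-(1 / 2) * ((z - x₀) ⬝ᵥ ((Kᵀ * diagonal d * K)⁻¹⁻¹ *ᵥ (z - x₀)))))
      = |K.det| * ∏ j, f j ((K *ᵥ z) j) := by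
    intro z
    rw [inv_inv_transpose_mul_diagonal_mul hK fun j => (hd j).ne',
      two_pi_rpow_mul_det_inv_transpose_mul_diagonal_mul_rpow K hd,
      dotProduct_transpose_mul_diagonal_mul_mulVec, dotProduct_transpose_mul_diagonal_mul_mulVec,
      mulVec_sub, mul_left_comm, mul_assoc, ← Real.exp_add, mul_sum, mul_sum, ← sum_add_distrib,
      Real.exp_sum, ← prod_mul_distrib]
    congr 1
    refine prod_congr rfl fun j _ => ?_
    simp only [f, Pi.sub_apply]
    ring_nf
  simp_rw [hfactor]
  rw [integral_const_mul, integral_comp_mulVec hK (fun y : ι → ℝ => ∏ j, f j (y j)), smul_eq_mul,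
    integral_fintype_prod_volume_eq_prod, ← mul_assoc, mul_inv_cancel₀ (abs_pos.2 hK).ne',
    one_mul]
  exact prod_congr rfl fun j _ => integral_sqrt_mul_exp_sq_add_sq (ha j) (hd j) _

theorem smul_transpose_mul_add_smul_transpose_mul_eq {A : Matrix κ ι ℝ} {L : Matrix ι ι ℝ}
    (hL : IsUnit L.det) {v : ι → ι → ℝ} (hV : (of v)ᵀ * of v = 1) {lam : ι → ℝ}
    (hH : (L⁻¹)ᵀ * Aᵀ * A * L⁻¹ = ∑ j, lam j • vecMulVec (v j) (v j)) (μ σ : ℝ) :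
    μ • (Aᵀ * A) + σ • (Lᵀ * L)
      = (of v * L)ᵀ * diagonal (fun j => σ + μ * lam j) * (of v * L) := by
  have hLtLit : Lᵀ * (L⁻¹)ᵀ = 1 := by
    rw [← transpose_mul, nonsing_inv_mul L hL, transpose_one]
  have hgram : Aᵀ * A = Lᵀ * ((L⁻¹)ᵀ * Aᵀ * A * L⁻¹) * L := by
    simp only [← Matrix.mul_assoc]
    rw [hLtLit, Matrix.one_mul, Matrix.mul_assoc _ L⁻¹, nonsing_inv_mul L hL, Matrix.mul_one]
  have hconj : (of v * L)ᵀ * diagonal (fun j => σ + μ * lam j) * (of v * L)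
      = Lᵀ * ((of v)ᵀ * diagonal (fun j => σ + μ * lam j) * of v) * L := by
    rw [transpose_mul]; simp only [Matrix.mul_assoc]
  rw [hconj, ← smul_one_add_smul_transpose_mul_diagonal_mul hV, hgram, hH,
    sum_smul_vecMulVec_eq_transpose_mul_diagonal_mul]
  simp only [Matrix.mul_add, Matrix.add_mul, Matrix.mul_smul, Matrix.smul_mul, Matrix.mul_one]
  exact add_comm _ _

theorem inv_mul_inv_smul_one_add_smul_sum_filter_mul (L : Matrix ι ι ℝ) {v : ι → ι → ℝ}
    (hV : (of v)ᵀ * of v = 1) (p : ι → Prop) [DecidablePred p] (lam : ι → ℝ) (μ σ : ℝ) :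
    L⁻¹ * (σ • (1 : Matrix ι ι ℝ) + μ • ∑ j ∈ univ.filter p, lam j • vecMulVec (v j) (v j))⁻¹
        * (L⁻¹)ᵀ
      = ((of v * L)ᵀ * diagonal (fun j => σ + μ * if p j then lam j else 0) * (of v * L))⁻¹ := by
  have hfilter : ∑ j ∈ univ.filter p, lam j • vecMulVec (v j) (v j)
      = ∑ j, (if p j then lam j else 0) • vecMulVec (v j) (v j) := by
    rw [sum_filter]
    exact sum_congr rfl fun j _ => by split_ifs <;> simp
  rw [hfilter, sum_smul_vecMulVec_eq_transpose_mul_diagonal_mul,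
    smul_one_add_smul_transpose_mul_diagonal_mul hV, ← inv_transpose_mul_mul, transpose_mul]
  simp only [Matrix.mul_assoc]

theorem of_mul_mulVec_inv_transpose_mul_diagonal_mul_mulVec (A : Matrix κ ι ℝ)
    {L : Matrix ι ι ℝ} (hL : IsUnit L.det) {v : ι → ι → ℝ} (hV : of v * (of v)ᵀ = 1)
    {d : ι → ℝ} (hd : ∀ j, d j ≠ 0) (b : κ → ℝ) :
    (of v * L) *ᵥ (((of v * L)ᵀ * diagonal d * (of v * L))⁻¹ *ᵥ (Aᵀ *ᵥ b))
      = fun j => (d j)⁻¹ * (b ⬝ᵥ (A *ᵥ (L⁻¹ *ᵥ v j))) := by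
  have hK : IsUnit (of v * L).det := by
    rw [det_mul]; exact (isUnit_det_of_right_inverse hV).mul hL
  have hKtinv : (of v * L)ᵀ⁻¹ = of v * (L⁻¹)ᵀ := by
    rw [transpose_mul, Matrix.mul_inv_rev, inv_eq_left_inv hV, transpose_nonsing_inv]
  rw [mulVec_inv_transpose_mul_diagonal_mul_mulVec hK hd, hKtinv]
  funext j
  rw [← mulVec_mulVec]
  change (d j)⁻¹ * (v j ⬝ᵥ _) = _
  rw [dotProduct_mulVec, vecMul_transpose, dotProduct_mulVec, vecMul_transpose, dotProduct_comm]

theorem exp_neg_half_dotProduct_sub_mulVec_pow (K : Matrix ι ι ℝ) (s d : ι → ℝ) (ℓ : ℕ)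
    (z : ι → ℝ) :
    Real.exp (-(1 / 2) * (z ⬝ᵥ ((Kᵀ * diagonal s * K - Kᵀ * diagonal d * K) *ᵥ z))) ^ ℓ
      = Real.exp (-(1 / 2) * (z ⬝ᵥ ((Kᵀ * diagonal (fun j => ℓ * (s j - d j)) * K) *ᵥ z))) := by
  rw [← Real.exp_nat_mul, sub_mulVec, dotProduct_sub,
    dotProduct_transpose_mul_diagonal_mul_mulVec, dotProduct_transpose_mul_diagonal_mul_mulVec,
    dotProduct_transpose_mul_diagonal_mul_mulVec, ← sum_sub_distrib, mul_sum, mul_sum, mul_sum]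
  exact congrArg Real.exp (sum_congr rfl fun j _ => by ring)

end

theorem sqrt_div_add_mul_exp_eq {σ t : ℝ} (hσ : 0 < σ) (ht : 0 ≤ t) (μ c : ℝ) :
    Real.sqrt (σ / (σ + t)) * Real.exp (-(σ * t * (μ * (σ⁻¹ * c)) ^ 2 / (2 * (σ + t))))
      = (Real.sqrt (1 + t / σ))⁻¹ * Real.exp (-(μ ^ 2 / (2 * σ) * (t / (t + σ)) * c ^ 2)) := by
  have hσt : σ / (σ + t) = (1 + t / σ)⁻¹ := by field_simp
  rw [hσt, Real.sqrt_inv]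
  congr 3
  field_simp
  ring

theorem prod_sqrt_div_mul_exp_eq_inv {n : ℕ} {μ σ : ℝ} (hμ : 0 ≤ μ) (hσ : 0 < σ)
    {lam : Fin n → ℝ} (hlam : ∀ j, 0 ≤ lam j) (k ℓ : ℕ) (c : Fin n → ℝ) {d a : Fin n → ℝ}
    (hd : ∀ j, d j = σ + μ * if (j : ℕ) < k then lam j else 0)
    (ha : ∀ j, a j = ℓ * (σ + μ * lam j - d j)) :
    ∏ j, Real.sqrt (d j / (d j + a j)) *
        Real.exp (-(d j * a j * (μ * ((d j)⁻¹ * c j)) ^ 2 / (2 * (d j + a j))))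
      = (Real.exp (μ ^ 2 / (2 * σ) * ∑ j ∈ univ.filter (fun j : Fin n => k ≤ (j : ℕ)),
            ((ℓ : ℝ) * μ * lam j / ((ℓ : ℝ) * μ * lam j + σ)) * c j ^ 2) *
          ∏ j ∈ univ.filter (fun j : Fin n => k ≤ (j : ℕ)),
            Real.sqrt (1 + (ℓ : ℝ) * μ * lam j / σ))⁻¹ := by
  have hfactor : ∀ j, Real.sqrt (d j / (d j + a j)) *
        Real.exp (-(d j * a j * (μ * ((d j)⁻¹ * c j)) ^ 2 / (2 * (d j + a j))))
      = if k ≤ (j : ℕ) then (Real.sqrt (1 + (ℓ : ℝ) * μ * lam j / σ))⁻¹ *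
          Real.exp (-(μ ^ 2 / (2 * σ) * ((ℓ : ℝ) * μ * lam j / ((ℓ : ℝ) * μ * lam j + σ)) *
            c j ^ 2)) else 1 := by
    intro j
    rw [ha, hd]
    by_cases hkj : k ≤ (j : ℕ)
    · have ht : (ℓ : ℝ) * (σ + μ * lam j - σ) = ℓ * μ * lam j := by ring
      rw [if_neg (not_lt.2 hkj), if_pos hkj, mul_zero, add_zero, ht]
      exact sqrt_div_add_mul_exp_eq hσ (by have := hlam j; positivity) μ (c j)
    · have hdpos : 0 < σ + μ * lam j := by have := hlam j; positivity
      simp [if_pos (not_le.1 hkj), hkj, hdpos.ne']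
  rw [prod_congr rfl fun j _ => hfactor j, ← prod_filter, prod_mul_distrib, prod_inv_distrib,
    ← Real.exp_sum, mul_inv, mul_sum, ← Real.exp_neg, ← sum_neg_distrib, mul_comm]
  simp only [mul_assoc]

theorem stmt9_general
    (m n : ℕ)
    (A : Matrix (Fin m) (Fin n) ℝ) (L : Matrix (Fin n) (Fin n) ℝ) (hL : IsUnit L.det)
    (μ σ : ℝ) (hμ : 0 < μ) (hσ : 0 < σ)
    (b : Fin m → ℝ)
    (v : Fin n → Fin n → ℝ) (lam : Fin n → ℝ)
    (horth : ∀ i j, v i ⬝ᵥ v j = if i = j then (1 : ℝ) else 0)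
    (hlam_nonneg : ∀ j, 0 ≤ lam j)
    (hHdecomp : (L⁻¹)ᵀ * Aᵀ * A * L⁻¹ = ∑ j, lam j • vecMulVec (v j) (v j))
    (k : ℕ)
    (Γcond : Matrix (Fin n) (Fin n) ℝ)
    (hΓcond : Γcond = (μ • (Aᵀ * A) + σ • (Lᵀ * L))⁻¹)
    (Γhat : Matrix (Fin n) (Fin n) ℝ)
    (hΓhat : Γhat = L⁻¹ * (σ • (1 : Matrix (Fin n) (Fin n) ℝ) +
        μ • ∑ j ∈ Finset.univ.filter (fun j : Fin n => (j : ℕ) < k),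
          lam j • vecMulVec (v j) (v j))⁻¹ * (L⁻¹)ᵀ)
    (xhat : Fin n → ℝ) (hxhat : xhat = μ • (Γhat *ᵥ (Aᵀ *ᵥ b)))
    (w : (Fin n → ℝ) → ℝ)
    (hw : ∀ x, w x = Real.exp (-(1/2) * (x ⬝ᵥ ((Γcond⁻¹ - Γhat⁻¹) *ᵥ x))))
    (η : (Fin n → ℝ) → (Fin n → ℝ) → ℝ)
    (hη : ∀ z x, η z x = w z / w x)
    (gfun : (Fin n → ℝ) → ℝ)
    (hgfun : ∀ x, gfun x = (2 * Real.pi) ^ (-(n : ℝ) / 2) * Γhat.det ^ (-(1 : ℝ) / 2) *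
        Real.exp (-(1/2) * ((x - xhat) ⬝ᵥ (Γhat⁻¹ *ᵥ (x - xhat)))))
    (N : ℕ → ℝ)
    (hN : ∀ ℓ : ℕ, N ℓ = Real.exp ((μ ^ 2 / (2 * σ)) *
        ∑ j ∈ Finset.univ.filter (fun j : Fin n => k ≤ (j : ℕ)),
          (((ℓ : ℝ) * μ * lam j) / ((ℓ : ℝ) * μ * lam j + σ)) *
            (b ⬝ᵥ (A *ᵥ (L⁻¹ *ᵥ v j))) ^ 2) *
      ∏ j ∈ Finset.univ.filter (fun j : Fin n => k ≤ (j : ℕ)),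
        Real.sqrt (1 + (ℓ : ℝ) * μ * lam j / σ))
    :
    ∀ ℓ : ℕ, 0 < ℓ → ∀ x : Fin n → ℝ,
      (∫ z : Fin n → ℝ, η z x ^ ℓ * gfun z) = 1 / (N ℓ * w x ^ ℓ) ∧
      (∫ z : Fin n → ℝ, w z ^ ℓ * gfun z) = 1 / N ℓ := by
  intro ℓ _ x
  have hVVt := of_mul_transpose_of_eq_one horth
  have hVtV : (of v)ᵀ * of v = 1 := mul_eq_one_comm.mp hVVt
  have hK : (of v * L).det ≠ 0 := by
    rw [det_mul]; exact ((isUnit_det_of_right_inverse hVVt).mul hL).ne_zero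
  set d : Fin n → ℝ := fun j => σ + μ * if (j : ℕ) < k then lam j else 0
  set a : Fin n → ℝ := fun j => ℓ * (σ + μ * lam j - d j)
  have hd : ∀ j, 0 < d j := fun j => by
    have := hlam_nonneg j; simp only [d]; split_ifs <;> positivity
  have ha : ∀ j, 0 ≤ a j := fun j => by
    have := hlam_nonneg j; simp only [a, d]; split_ifs <;> ring_nf <;> positivity
  have hhat : Γhat = ((of v * L)ᵀ * diagonal d * (of v * L))⁻¹ :=
    hΓhat.trans (inv_mul_inv_smul_one_add_smul_sum_filter_mul L hVtV _ lam μ σ)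
  have hwpow : ∀ z, w z ^ ℓ =
      Real.exp (-(1 / 2) * (z ⬝ᵥ (((of v * L)ᵀ * diagonal a * (of v * L)) *ᵥ z))) := fun z => by
    rw [hw, hΓcond, smul_transpose_mul_add_smul_transpose_mul_eq hL hVtV hHdecomp, hhat,
      inv_inv_transpose_mul_diagonal_mul hK fun j => (hd j).ne',
      inv_inv_transpose_mul_diagonal_mul hK fun j => by have := hlam_nonneg j; positivity,
      exp_neg_half_dotProduct_sub_mulVec_pow]
  have hmoment : ∫ z, w z ^ ℓ * gfun z = 1 / N ℓ := by
    have hgauss := integral_exp_quadForm_mul_gaussianPDF hK ha hd hhat xhat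
    rw [Fintype.card_fin] at hgauss
    simp_rw [hwpow, hgfun]
    rw [hgauss, hxhat, mulVec_smul, hhat,
      of_mul_mulVec_inv_transpose_mul_diagonal_mul_mulVec A hL hVVt (fun j => (hd j).ne') b, hN,
      one_div]
    simp only [Pi.smul_apply, smul_eq_mul]
    exact prod_sqrt_div_mul_exp_eq_inv hμ.le hσ hlam_nonneg k ℓ _ (fun _ => rfl) (fun _ => rfl)
  refine ⟨?_, hmoment⟩
  simp_rw [hη, div_pow, div_mul_eq_mul_div, integral_div, hmoment, div_div]

theorem stmt9
    (m n : ℕ) (hm : 0 < m) (hn : 0 < n)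
    (A : Matrix (Fin m) (Fin n) ℝ) (L : Matrix (Fin n) (Fin n) ℝ) (hL : IsUnit L.det)
    (μ σ : ℝ) (hμ : 0 < μ) (hσ : 0 < σ)
    (b : Fin m → ℝ)
    (v : Fin n → Fin n → ℝ) (lam : Fin n → ℝ)
    (horth : ∀ i j, v i ⬝ᵥ v j = if i = j then (1 : ℝ) else 0)
    (hlam_nonneg : ∀ j, 0 ≤ lam j) (hlam_anti : Antitone lam)
    (hHdecomp : (L⁻¹)ᵀ * Aᵀ * A * L⁻¹ = ∑ j, lam j • vecMulVec (v j) (v j))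
    (k : ℕ) (hk : k ≤ n)
    (Γcond : Matrix (Fin n) (Fin n) ℝ)
    (hΓcond : Γcond = (μ • (Aᵀ * A) + σ • (Lᵀ * L))⁻¹)
    (Γhat : Matrix (Fin n) (Fin n) ℝ)
    (hΓhat : Γhat = L⁻¹ * (σ • (1 : Matrix (Fin n) (Fin n) ℝ) +
        μ • ∑ j ∈ Finset.univ.filter (fun j : Fin n => (j : ℕ) < k),
          lam j • vecMulVec (v j) (v j))⁻¹ * (L⁻¹)ᵀ)
    (xhat : Fin n → ℝ) (hxhat : xhat = μ • (Γhat *ᵥ (Aᵀ *ᵥ b)))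
    (w : (Fin n → ℝ) → ℝ)
    (hw : ∀ x, w x = Real.exp (-(1/2) * (x ⬝ᵥ ((Γcond⁻¹ - Γhat⁻¹) *ᵥ x))))
    (η : (Fin n → ℝ) → (Fin n → ℝ) → ℝ)
    (hη : ∀ z x, η z x = w z / w x)
    (gfun : (Fin n → ℝ) → ℝ)
    (hgfun : ∀ x, gfun x = (2 * Real.pi) ^ (-(n : ℝ) / 2) * Γhat.det ^ (-(1 : ℝ) / 2) *
        Real.exp (-(1/2) * ((x - xhat) ⬝ᵥ (Γhat⁻¹ *ᵥ (x - xhat)))))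
    (N : ℕ → ℝ)
    (hN : ∀ ℓ : ℕ, N ℓ = Real.exp ((μ ^ 2 / (2 * σ)) *
        ∑ j ∈ Finset.univ.filter (fun j : Fin n => k ≤ (j : ℕ)),
          (((ℓ : ℝ) * μ * lam j) / ((ℓ : ℝ) * μ * lam j + σ)) *
            (b ⬝ᵥ (A *ᵥ (L⁻¹ *ᵥ v j))) ^ 2) *
      ∏ j ∈ Finset.univ.filter (fun j : Fin n => k ≤ (j : ℕ)),
        Real.sqrt (1 + (ℓ : ℝ) * μ * lam j / σ))
    :
    ∀ ℓ : ℕ, 0 < ℓ → ∀ x : Fin n → ℝ,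
      (∫ z : Fin n → ℝ, η z x ^ ℓ * gfun z) = 1 / (N ℓ * w x ^ ℓ) ∧
      (∫ z : Fin n → ℝ, w z ^ ℓ * gfun z) = 1 / N ℓ :=
  stmt9_general m n A L hL μ σ hμ hσ b v lam horth hlam_nonneg hHdecomp k Γcond hΓcond Γhat hΓhat
    xhat hxhat w hw η hη gfun hgfun N hN
end
end

section
/- The determinant of the inverse of the low-rank approximate covariance matrix satisfies det(Γ̂_cond^{-1}) = σ^n · det(L)² · ∏_{j=1}^k (1 + μλ_j/σ). -/
open Matrix MeasureTheory ProbabilityTheory Finset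

noncomputable section

/-! In the orthonormal basis `v`, the matrix `σ I + μ Σ_{j<k} λ_j v_j v_jᵀ` is diagonal with
entries `σ + μ λ_j` for `j < k` and `σ` otherwise, so its determinant is
`σ ^ n ∏_{j<k} (1 + μ λ_j / σ)`; the congruence by `L⁻¹` contributes `det L ^ 2`. -/

namespace Matrix

variable {ι R : Type*} [Fintype ι] [DecidableEq ι]

theorem sum_smul_vecMulVec_eq_transpose_mul_diagonal_mul [CommSemiring R] (v : ι → ι → R)
    (c : ι → R) : ∑ j, c j • vecMulVec (v j) (v j) = (of v)ᵀ * diagonal c * of v := by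
  ext i l
  rw [mul_apply, sum_apply]
  simp only [mul_diagonal, smul_apply, vecMulVec_apply, transpose_apply, of_apply, smul_eq_mul]
  exact sum_congr rfl fun j _ => by ring

theorem det_smul_one_add_sum_smul_vecMulVec [CommRing R] {v : ι → ι → R}
    (hv : ∀ i j, v i ⬝ᵥ v j = if i = j then 1 else 0) (σ : R) (c : ι → R) :
    det (σ • 1 + ∑ j, c j • vecMulVec (v j) (v j)) = ∏ j, (σ + c j) := by
  set V := of v
  have hV : V * Vᵀ = 1 := by
    ext i j
    simpa [V, mul_apply, one_apply, dotProduct] using hv i j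
  have hVinv : V⁻¹ = Vᵀ := inv_eq_right_inv hV
  have hconj : σ • 1 + ∑ j, c j • vecMulVec (v j) (v j) =
      V⁻¹ * diagonal (fun j => σ + c j) * V := by
    rw [hVinv, sum_smul_vecMulVec_eq_transpose_mul_diagonal_mul, ← diagonal_add,
      ← smul_one_eq_diagonal, Matrix.mul_add, Matrix.add_mul, Matrix.mul_smul, Matrix.smul_mul,
      Matrix.mul_one, mul_eq_one_comm.mp hV]
  rw [hconj, det_conj' ((isUnit_iff_isUnit_det V).2 (isUnit_det_of_right_inverse hV)),
    det_diagonal]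

/-- When `det A = 0`, `A⁻¹` is the junk value `0`, so `det A⁻¹ = (det A)⁻¹` still holds. -/
theorem det_inv_mul_inv_mul_transpose_inv {K : Type*} [Field K] (L M : Matrix ι ι K) :
    det ((L⁻¹ * M⁻¹ * L⁻¹ᵀ)⁻¹) = L.det ^ 2 * M.det := by
  simp only [det_nonsing_inv, det_mul, det_transpose, Ring.inverse_eq_inv', mul_inv, inv_inv]
  ring

end Matrix

theorem Finset.prod_add_ite_eq_pow_mul_prod_filter {ι K : Type*} [Fintype ι] [Field K]
    (p : ι → Prop) [DecidablePred p] {σ : K} (hσ : σ ≠ 0) (a : ι → K) :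
    ∏ j, (σ + if p j then a j else 0) = σ ^ Fintype.card ι * ∏ j with p j, (1 + a j / σ) := by
  rw [prod_filter, ← Finset.card_univ, ← prod_const, ← prod_mul_distrib]
  refine prod_congr rfl fun j _ => ?_
  split_ifs
  · field_simp
  · simp

theorem stmt13_general
    (n : ℕ) (L : Matrix (Fin n) (Fin n) ℝ)
    (μ σ : ℝ) (hσ : 0 < σ)
    (v : Fin n → Fin n → ℝ) (lam : Fin n → ℝ)
    (horth : ∀ i j, v i ⬝ᵥ v j = if i = j then (1 : ℝ) else 0)
    (k : ℕ)
    (Γhat : Matrix (Fin n) (Fin n) ℝ)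
    (hΓhat : Γhat = L⁻¹ * (σ • (1 : Matrix (Fin n) (Fin n) ℝ) +
        μ • ∑ j ∈ Finset.univ.filter (fun j : Fin n => (j : ℕ) < k),
          lam j • vecMulVec (v j) (v j))⁻¹ * (L⁻¹)ᵀ)
    :
    (Γhat⁻¹).det = σ ^ n * L.det ^ 2 *
      ∏ j ∈ Finset.univ.filter (fun j : Fin n => (j : ℕ) < k), (1 + μ * lam j / σ) := by
  have hweights :
      μ • ∑ j ∈ univ.filter (fun j : Fin n => (j : ℕ) < k), lam j • vecMulVec (v j) (v j) =
      ∑ j : Fin n, (if (j : ℕ) < k then μ * lam j else 0) • vecMulVec (v j) (v j) := by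
    rw [smul_sum, sum_filter]
    refine sum_congr rfl fun j _ => ?_
    split_ifs <;> simp [smul_smul]
  rw [hΓhat, det_inv_mul_inv_mul_transpose_inv, hweights,
    det_smul_one_add_sum_smul_vecMulVec horth, prod_add_ite_eq_pow_mul_prod_filter _ hσ.ne',
    Fintype.card_fin]
  ring

theorem stmt13
    (m n : ℕ) (hm : 0 < m) (hn : 0 < n)
    (A : Matrix (Fin m) (Fin n) ℝ) (L : Matrix (Fin n) (Fin n) ℝ) (hL : IsUnit L.det)
    (μ σ : ℝ) (hμ : 0 < μ) (hσ : 0 < σ)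
    (v : Fin n → Fin n → ℝ) (lam : Fin n → ℝ)
    (horth : ∀ i j, v i ⬝ᵥ v j = if i = j then (1 : ℝ) else 0)
    (hlam_nonneg : ∀ j, 0 ≤ lam j) (hlam_anti : Antitone lam)
    (hHdecomp : (L⁻¹)ᵀ * Aᵀ * A * L⁻¹ = ∑ j, lam j • vecMulVec (v j) (v j))
    (k : ℕ) (hk : k ≤ n)
    (Γhat : Matrix (Fin n) (Fin n) ℝ)
    (hΓhat : Γhat = L⁻¹ * (σ • (1 : Matrix (Fin n) (Fin n) ℝ) +
        μ • ∑ j ∈ Finset.univ.filter (fun j : Fin n => (j : ℕ) < k),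
          lam j • vecMulVec (v j) (v j))⁻¹ * (L⁻¹)ᵀ)
    :
    (Γhat⁻¹).det = σ ^ n * L.det ^ 2 *
      ∏ j ∈ Finset.univ.filter (fun j : Fin n => (j : ℕ) < k), (1 + μ * lam j / σ) :=
  stmt13_general n L μ σ hσ v lam horth k Γhat hΓhat
end
end

section
/- For every positive integer ℓ, the matrix M := ℓ·Γ_cond^{-1} + (1 − ℓ)·Γ̂_cond^{-1} satisfies M = Lᵀ (μ Σ_{j=1}^k λ_j v_j v_jᵀ + ℓμ Σ_{j=k+1}^n λ_j v_j v_jᵀ + σ I) L, and its determinant is det(M) = σ^n · det(L)² · ∏_{j=1}^k (1 + μλ_j/σ) · ∏_{j=k+1}^n (1 + ℓμλ_j/σ). -/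
open Matrix Finset
noncomputable section

theorem aux_conj (n : ℕ) (v : Fin n → Fin n → ℝ) (c : Fin n → ℝ) :
    (Matrix.of v)ᵀ * Matrix.diagonal c * (Matrix.of v) = ∑ j, c j • vecMulVec (v j) (v j) := by
  ext i i'
  simp only [Matrix.mul_apply, Matrix.diagonal_apply, Matrix.transpose_apply, Matrix.of_apply,
    Finset.sum_apply, Matrix.sum_apply, Matrix.smul_apply, vecMulVec_apply, smul_eq_mul,
    mul_ite, ite_mul, mul_zero, zero_mul, Finset.sum_ite_eq, Finset.sum_ite_eq',
    Finset.mem_univ, if_true]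
  exact Finset.sum_congr rfl fun j _ => by ring

theorem aux_key (n : ℕ) (v : Fin n → Fin n → ℝ)
    (horth : ∀ i j, v i ⬝ᵥ v j = if i = j then (1 : ℝ) else 0) (σ : ℝ) (c : Fin n → ℝ) :
    σ • (1 : Matrix (Fin n) (Fin n) ℝ) + ∑ j, c j • vecMulVec (v j) (v j) =
      (Matrix.of v)ᵀ * Matrix.diagonal (fun j => σ + c j) * (Matrix.of v) := by
  have hVVT : (Matrix.of v) * (Matrix.of v)ᵀ = 1 := by
    ext i j
    simpa [Matrix.mul_apply, Matrix.one_apply, dotProduct] using horth i j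
  have hVTV : (Matrix.of v)ᵀ * (Matrix.of v) = 1 := mul_eq_one_comm.mp hVVT
  have h1 : Matrix.diagonal (fun j => σ + c j)
      = σ • (1 : Matrix (Fin n) (Fin n) ℝ) + Matrix.diagonal c := by
    ext i j
    by_cases h : i = j <;> simp [Matrix.diagonal_apply, Matrix.one_apply, h]
  rw [h1, Matrix.mul_add, Matrix.add_mul, aux_conj, Matrix.mul_smul, Matrix.smul_mul,
    Matrix.mul_one, hVTV]

theorem stmt14
    (m n : ℕ) (hm : 0 < m) (hn : 0 < n)
    (A : Matrix (Fin m) (Fin n) ℝ) (L : Matrix (Fin n) (Fin n) ℝ) (hL : IsUnit L.det)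
    (μ σ : ℝ) (hμ : 0 < μ) (hσ : 0 < σ)
    (v : Fin n → Fin n → ℝ) (lam : Fin n → ℝ)
    (horth : ∀ i j, v i ⬝ᵥ v j = if i = j then (1 : ℝ) else 0)
    (hlam_nonneg : ∀ j, 0 ≤ lam j) (hlam_anti : Antitone lam)
    (hHdecomp : (L⁻¹)ᵀ * Aᵀ * A * L⁻¹ = ∑ j, lam j • vecMulVec (v j) (v j))
    (k : ℕ) (hk : k ≤ n)
    (Γcond : Matrix (Fin n) (Fin n) ℝ)
    (hΓcond : Γcond = (μ • (Aᵀ * A) + σ • (Lᵀ * L))⁻¹)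
    (Γhat : Matrix (Fin n) (Fin n) ℝ)
    (hΓhat : Γhat = L⁻¹ * (σ • (1 : Matrix (Fin n) (Fin n) ℝ) +
        μ • ∑ j ∈ Finset.univ.filter (fun j : Fin n => (j : ℕ) < k),
          lam j • vecMulVec (v j) (v j))⁻¹ * (L⁻¹)ᵀ)
    :
    ∀ ℓ : ℕ, 0 < ℓ →
      ((ℓ : ℝ) • Γcond⁻¹ + (1 - (ℓ : ℝ)) • Γhat⁻¹ =
        Lᵀ * (μ • (∑ j ∈ Finset.univ.filter (fun j : Fin n => (j : ℕ) < k), lam j • vecMulVec (v j) (v j)) +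
          ((ℓ : ℝ) * μ) • (∑ j ∈ Finset.univ.filter (fun j : Fin n => k ≤ (j : ℕ)), lam j • vecMulVec (v j) (v j)) +
          σ • (1 : Matrix (Fin n) (Fin n) ℝ)) * L) ∧
      ((ℓ : ℝ) • Γcond⁻¹ + (1 - (ℓ : ℝ)) • Γhat⁻¹).det =
        σ ^ n * L.det ^ 2 *
          (∏ j ∈ Finset.univ.filter (fun j : Fin n => (j : ℕ) < k), (1 + μ * lam j / σ)) *
          ∏ j ∈ Finset.univ.filter (fun j : Fin n => k ≤ (j : ℕ)), (1 + (ℓ : ℝ) * μ * lam j / σ) := by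
  intro ℓ hℓ
  set e : ℝ := (ℓ : ℝ) with he
  have he1 : 1 ≤ e := by
    have : (1 : ℕ) ≤ ℓ := hℓ
    rw [he]
    exact_mod_cast this
  set V : Matrix (Fin n) (Fin n) ℝ := Matrix.of v with hV
  have hVVT : V * Vᵀ = 1 := by
    ext i j
    simpa [hV, Matrix.mul_apply, Matrix.one_apply, dotProduct] using horth i j
  have hVTV : Vᵀ * V = 1 := mul_eq_one_comm.mp hVVT
  have hVdet : V.det * V.det = 1 := by
    have := congrArg Matrix.det hVTV
    simpa [Matrix.det_mul, Matrix.det_transpose] using this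
  have hLT : IsUnit Lᵀ.det := by rwa [Matrix.det_transpose]
  set S1 : Matrix (Fin n) (Fin n) ℝ :=
    ∑ j ∈ Finset.univ.filter (fun j : Fin n => (j : ℕ) < k), lam j • vecMulVec (v j) (v j) with hS1
  set S2 : Matrix (Fin n) (Fin n) ℝ :=
    ∑ j ∈ Finset.univ.filter (fun j : Fin n => k ≤ (j : ℕ)), lam j • vecMulVec (v j) (v j) with hS2
  set c : ℝ → Fin n → ℝ :=
    fun t j => if (j : ℕ) < k then μ * lam j else t * μ * lam j with hc
  have hfilter : Finset.univ.filter (fun j : Fin n => ¬ (j : ℕ) < k)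
      = Finset.univ.filter (fun j : Fin n => k ≤ (j : ℕ)) := by
    ext j; simp [not_lt]
  -- uniform decomposition
  have hsum : ∀ t : ℝ,
      σ • (1 : Matrix (Fin n) (Fin n) ℝ) + (μ • S1 + (t * μ) • S2)
        = Vᵀ * Matrix.diagonal (fun j => σ + c t j) * V := by
    intro t
    have h2 : μ • S1 + (t * μ) • S2 = ∑ j : Fin n, c t j • vecMulVec (v j) (v j) := by
      rw [← Finset.sum_filter_add_sum_filter_not Finset.univ (fun j : Fin n => (j : ℕ) < k)
        (fun j => c t j • vecMulVec (v j) (v j)), hfilter]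
      congr 1
      · rw [hS1, Finset.smul_sum]
        refine Finset.sum_congr rfl fun j hj => ?_
        simp only [Finset.mem_filter, Finset.mem_univ, true_and] at hj
        simp [hc, hj, smul_smul]
      · rw [hS2, Finset.smul_sum]
        refine Finset.sum_congr rfl fun j hj => ?_
        simp only [Finset.mem_filter, Finset.mem_univ, true_and] at hj
        simp [hc, not_lt.mpr hj, smul_smul]
    rw [h2]
    exact aux_key n v horth σ _
  have hfacpos : ∀ (t : ℝ), 0 ≤ t → ∀ j : Fin n, 0 < σ + c t j := by
    intro t ht j
    have h1 : 0 ≤ μ * lam j := mul_nonneg hμ.le (hlam_nonneg j)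
    have h2 : 0 ≤ t * μ * lam j := mul_nonneg (mul_nonneg ht hμ.le) (hlam_nonneg j)
    have h3 : c t j = if (j : ℕ) < k then μ * lam j else t * μ * lam j := rfl
    rw [h3]; split <;> linarith
  have hdet : ∀ t : ℝ,
      (Lᵀ * (Vᵀ * Matrix.diagonal (fun j => σ + c t j) * V) * L).det
        = L.det ^ 2 * ∏ j, (σ + c t j) := by
    intro t
    simp only [Matrix.det_mul, Matrix.det_transpose, Matrix.det_diagonal]
    linear_combination (L.det * L.det * ∏ j, (σ + c t j)) * hVdet
  -- P and its invertibility
  set P : Matrix (Fin n) (Fin n) ℝ := σ • 1 + μ • S1 with hP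
  have hP0 : P = σ • (1 : Matrix (Fin n) (Fin n) ℝ) + (μ • S1 + ((0:ℝ) * μ) • S2) := by
    simp [hP]
  have hPdiag : P = Vᵀ * Matrix.diagonal (fun j => σ + c 0 j) * V := by
    rw [hP0, hsum 0]
  have hPdet : IsUnit P.det := by
    have : P.det = ∏ j, (σ + c 0 j) := by
      rw [hPdiag]
      simp only [Matrix.det_mul, Matrix.det_transpose, Matrix.det_diagonal]
      linear_combination (∏ j, (σ + c 0 j)) * hVdet
    rw [this]
    exact (Finset.prod_pos fun j _ => hfacpos 0 le_rfl j).ne'.isUnit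
  -- B = pre-inverse of Γcond
  set B : Matrix (Fin n) (Fin n) ℝ := μ • (Aᵀ * A) + σ • (Lᵀ * L) with hB
  have hATA : Lᵀ * (∑ j, lam j • vecMulVec (v j) (v j)) * L = Aᵀ * A := by
    rw [← hHdecomp, Matrix.transpose_nonsing_inv]
    simp only [Matrix.mul_assoc]
    rw [Matrix.nonsing_inv_mul _ hL, Matrix.mul_one, Matrix.mul_nonsing_inv_cancel_left _ _ hLT]
  have hsplit : (∑ j, lam j • vecMulVec (v j) (v j)) = S1 + S2 := by
    rw [hS1, hS2, ← hfilter,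
      ← Finset.sum_filter_add_sum_filter_not Finset.univ (fun j : Fin n => (j : ℕ) < k)]
  have hBfac : B = Lᵀ * (σ • (1 : Matrix (Fin n) (Fin n) ℝ) + (μ • S1 + ((1:ℝ) * μ) • S2)) * L := by
    rw [hB, ← hATA, hsplit]
    simp only [Matrix.mul_add, Matrix.add_mul, Matrix.mul_smul, Matrix.smul_mul,
      Matrix.mul_one, smul_add, one_mul]
    abel
  have hBdiag : B = Lᵀ * (Vᵀ * Matrix.diagonal (fun j => σ + c 1 j) * V) * L := by
    rw [hBfac, hsum 1]
  have hBdet : IsUnit B.det := by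
    rw [hBdiag, hdet 1]
    have hprodpos : 0 < ∏ j, (σ + c 1 j) := Finset.prod_pos fun j _ => hfacpos 1 zero_le_one j
    exact (mul_ne_zero (pow_ne_zero 2 hL.ne_zero) hprodpos.ne').isUnit
  -- inverses
  have hGc : Γcond⁻¹ = B := by
    rw [hΓcond, Matrix.nonsing_inv_nonsing_inv _ hBdet]
  have hGh : Γhat⁻¹ = Lᵀ * P * L := by
    rw [hΓhat]
    rw [Matrix.mul_inv_rev, Matrix.mul_inv_rev, Matrix.transpose_nonsing_inv,
      Matrix.nonsing_inv_nonsing_inv _ hLT, Matrix.nonsing_inv_nonsing_inv _ hPdet,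
      Matrix.nonsing_inv_nonsing_inv _ hL, Matrix.mul_assoc]
  -- main combination
  have hmain : e • Γcond⁻¹ + (1 - e) • Γhat⁻¹
      = Lᵀ * (σ • (1 : Matrix (Fin n) (Fin n) ℝ) + (μ • S1 + (e * μ) • S2)) * L := by
    rw [hGc, hGh, hBfac, hP]
    simp only [Matrix.mul_add, Matrix.add_mul, Matrix.mul_smul, Matrix.smul_mul,
      Matrix.mul_one, smul_add, smul_smul]
    module
  constructor
  · rw [hmain]
    congr 1
    congr 1
    module
  · rw [hmain, hsum e, hdet e]
    -- product computation
    have hprod : ∏ j, (σ + c e j)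
        = (∏ j ∈ Finset.univ.filter (fun j : Fin n => (j : ℕ) < k), (σ + μ * lam j)) *
          ∏ j ∈ Finset.univ.filter (fun j : Fin n => k ≤ (j : ℕ)), (σ + e * μ * lam j) := by
      rw [← Finset.prod_filter_mul_prod_filter_not Finset.univ (fun j : Fin n => (j : ℕ) < k), hfilter]
      congr 1
      · refine Finset.prod_congr rfl fun j hj => ?_
        simp only [Finset.mem_filter, Finset.mem_univ, true_and] at hj
        simp [hc, hj]
      · refine Finset.prod_congr rfl fun j hj => ?_
        simp only [Finset.mem_filter, Finset.mem_univ, true_and] at hj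
        simp [hc, not_lt.mpr hj]
    rw [hprod]
    have h1 : ∏ j ∈ Finset.univ.filter (fun j : Fin n => (j : ℕ) < k), (σ + μ * lam j)
        = σ ^ (Finset.univ.filter (fun j : Fin n => (j : ℕ) < k)).card *
          ∏ j ∈ Finset.univ.filter (fun j : Fin n => (j : ℕ) < k), (1 + μ * lam j / σ) := by
      rw [← Finset.prod_const, ← Finset.prod_mul_distrib]
      refine Finset.prod_congr rfl fun j _ => ?_
      field_simp
    have h2 : ∏ j ∈ Finset.univ.filter (fun j : Fin n => k ≤ (j : ℕ)), (σ + e * μ * lam j)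
        = σ ^ (Finset.univ.filter (fun j : Fin n => k ≤ (j : ℕ))).card *
          ∏ j ∈ Finset.univ.filter (fun j : Fin n => k ≤ (j : ℕ)), (1 + e * μ * lam j / σ) := by
      rw [← Finset.prod_const, ← Finset.prod_mul_distrib]
      refine Finset.prod_congr rfl fun j _ => ?_
      field_simp
    have hcard : (Finset.univ.filter (fun j : Fin n => (j : ℕ) < k)).card +
        (Finset.univ.filter (fun j : Fin n => k ≤ (j : ℕ))).card = n := by
      rw [← hfilter, Finset.card_filter_add_card_filter_not]
      simp
    have hpow : σ ^ n = σ ^ (Finset.univ.filter (fun j : Fin n => (j : ℕ) < k)).card *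
        σ ^ (Finset.univ.filter (fun j : Fin n => k ≤ (j : ℕ))).card := by
      rw [← pow_add, hcard]
    rw [h1, h2, hpow]
    ring
end
end

section
/- For every positive integer ℓ, the matrix M := ℓ·Γ_cond^{-1} + (1 − ℓ)·Γ̂_cond^{-1} is invertible and satisfies M^{-1} − Γ̂_cond = −(1/σ) Σ_{j=k+1}^n (ℓμλ_j/(ℓμλ_j + σ)) L^{-1} v_j v_jᵀ L^{-T}. -/
/-!
Let `V` be the orthogonal matrix with rows `vⱼ` and `Q := V L`. The eigendecomposition of `H` reads
`AᵀA = Qᵀ diag(λ) Q`, and `LᵀL = QᵀQ`, so `Γ_cond⁻¹`, `Γ̂_cond⁻¹` and `M` are all of the form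
`Qᵀ diag(d) Q`, with weights `μλⱼ + σ`, `σ + [j < k] μλⱼ` and `σ + μλⱼ` (`j < k`) resp.
`σ + ℓμλⱼ` (`k ≤ j`). All weights are positive, so `M` is invertible and `M⁻¹ - Γ̂_cond` is
`Q⁻¹ diag(eⱼ) Q⁻ᵀ`, where `eⱼ` vanishes for `j < k` and otherwise is
`(σ + ℓμλⱼ)⁻¹ - σ⁻¹ = -(1/σ) ℓμλⱼ / (ℓμλⱼ + σ)`.
-/

open Finset

namespace Matrix

variable {n : Type*} [Fintype n] [DecidableEq n]

theorem sum_smul_vecMulVec_self_eq_transpose_mul_diagonal_mul {R : Type*} [CommSemiring R]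
    (v : n → n → R) (a : n → R) :
    ∑ j, a j • vecMulVec (v j) (v j) = (of v)ᵀ * diagonal a * of v := by
  ext i k
  simp only [sum_apply, smul_apply, vecMulVec_apply, mul_apply, transpose_apply, of_apply,
    diagonal_apply, smul_eq_mul, mul_ite, mul_zero, sum_ite_eq', mem_univ, if_true]
  exact sum_congr rfl fun j _ => by ring

theorem smul_transpose_mul_diagonal_mul_add_smul {R : Type*} [CommSemiring R]
    (Q : Matrix n n R) (a b : R) (d e : n → R) :
    a • (Qᵀ * diagonal d * Q) + b • (Qᵀ * diagonal e * Q) =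
      Qᵀ * diagonal (fun i => a * d i + b * e i) * Q := by
  have hsmul (c : R) (f : n → R) : c • (Qᵀ * diagonal f * Q) = Qᵀ * diagonal (c • f) * Q := by
    rw [diagonal_smul, Matrix.mul_smul, Matrix.smul_mul]
  rw [hsmul, hsmul, ← Matrix.add_mul, ← Matrix.mul_add, diagonal_add]
  rfl

variable {K : Type*} [Field K]

theorem inv_diagonal_of_ne_zero {d : n → K} (hd : ∀ i, d i ≠ 0) :
    (diagonal d)⁻¹ = diagonal d⁻¹ :=
  inv_eq_left_inv <| by
    rw [diagonal_mul_diagonal, ← diagonal_one]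
    exact congrArg diagonal (funext fun i => inv_mul_cancel₀ (hd i))

theorem isUnit_det_transpose_mul_diagonal_mul {Q : Matrix n n K} (hQ : IsUnit Q.det)
    {d : n → K} (hd : ∀ i, d i ≠ 0) : IsUnit (Qᵀ * diagonal d * Q).det := by
  rw [det_mul, det_mul, det_transpose, det_diagonal]
  exact (hQ.mul (isUnit_iff_ne_zero.mpr (prod_ne_zero_iff.mpr fun i _ => hd i))).mul hQ

theorem inv_transpose_mul_diagonal_mul (Q : Matrix n n K) {d : n → K} (hd : ∀ i, d i ≠ 0) :
    (Qᵀ * diagonal d * Q)⁻¹ = Q⁻¹ * diagonal d⁻¹ * Q⁻¹ᵀ := by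
  rw [mul_inv_rev, mul_inv_rev, inv_diagonal_of_ne_zero hd, transpose_nonsing_inv,
    Matrix.mul_assoc]

theorem isUnit_det_smul_inv_add_smul_inv_and_inv_sub {Q : Matrix n n K} (hQ : IsUnit Q.det)
    {c t : n → K} (hc : ∀ i, c i ≠ 0) (ht : ∀ i, t i ≠ 0) {a b : K}
    (hw : ∀ i, a * c i + b * t i ≠ 0) {Γ₁ Γ₂ : Matrix n n K}
    (h₁ : Γ₁ = (Qᵀ * diagonal c * Q)⁻¹) (h₂ : Γ₂ = (Qᵀ * diagonal t * Q)⁻¹) :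
    IsUnit (a • Γ₁⁻¹ + b • Γ₂⁻¹).det ∧
      (a • Γ₁⁻¹ + b • Γ₂⁻¹)⁻¹ - Γ₂ =
        Q⁻¹ * diagonal (fun i => (a * c i + b * t i)⁻¹ - (t i)⁻¹) * Q⁻¹ᵀ := by
  have hM : a • Γ₁⁻¹ + b • Γ₂⁻¹ = Qᵀ * diagonal (fun i => a * c i + b * t i) * Q := by
    rw [h₁, h₂, nonsing_inv_nonsing_inv _ (isUnit_det_transpose_mul_diagonal_mul hQ hc),
      nonsing_inv_nonsing_inv _ (isUnit_det_transpose_mul_diagonal_mul hQ ht),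
      smul_transpose_mul_diagonal_mul_add_smul]
  rw [hM, h₂, inv_transpose_mul_diagonal_mul Q hw, inv_transpose_mul_diagonal_mul Q ht,
    ← Matrix.sub_mul, ← Matrix.mul_sub, diagonal_sub]
  exact ⟨isUnit_det_transpose_mul_diagonal_mul hQ hw, rfl⟩

theorem of_mul_transpose_eq_one {v : n → n → K}
    (horth : ∀ i j, v i ⬝ᵥ v j = if i = j then (1 : K) else 0) : of v * (of v)ᵀ = 1 := by
  ext i j
  simpa [mul_apply, dotProduct, one_apply] using horth i j

theorem sum_vecMulVec_self_eq_one {v : n → n → K}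
    (horth : ∀ i j, v i ⬝ᵥ v j = if i = j then (1 : K) else 0) :
    ∑ j, vecMulVec (v j) (v j) = 1 := by
  simpa [mul_eq_one_comm.mp (of_mul_transpose_eq_one horth)] using
    sum_smul_vecMulVec_self_eq_transpose_mul_diagonal_mul v 1

theorem transpose_mul_sum_smul_vecMulVec_self_mul (v : n → n → K) (L : Matrix n n K)
    (d : n → K) :
    Lᵀ * (∑ j, d j • vecMulVec (v j) (v j)) * L = (of v * L)ᵀ * diagonal d * (of v * L) := by
  simp only [sum_smul_vecMulVec_self_eq_transpose_mul_diagonal_mul, transpose_mul,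
    Matrix.mul_assoc]

theorem inv_mul_sum_smul_vecMulVec_self_mul_inv_transpose {v : n → n → K}
    (horth : ∀ i j, v i ⬝ᵥ v j = if i = j then (1 : K) else 0) (L : Matrix n n K) (d : n → K) :
    L⁻¹ * (∑ j, d j • vecMulVec (v j) (v j)) * L⁻¹ᵀ =
      (of v * L)⁻¹ * diagonal d * (of v * L)⁻¹ᵀ := by
  have hinv : (of v)⁻¹ = (of v)ᵀ := inv_eq_left_inv (mul_eq_one_comm.mp
    (of_mul_transpose_eq_one horth))
  simp only [sum_smul_vecMulVec_self_eq_transpose_mul_diagonal_mul, mul_inv_rev, hinv,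
    transpose_mul, transpose_transpose, Matrix.mul_assoc]

theorem isUnit_det_of_mul_of_isUnit_det {v : n → n → K}
    (horth : ∀ i j, v i ⬝ᵥ v j = if i = j then (1 : K) else 0) {L : Matrix n n K}
    (hL : IsUnit L.det) : IsUnit (of v * L).det := by
  rw [det_mul]
  exact (isUnit_det_of_right_inverse (of_mul_transpose_eq_one horth)).mul hL

theorem transpose_mul_self_eq_transpose_mul_diagonal_one_mul {v : n → n → K}
    (horth : ∀ i j, v i ⬝ᵥ v j = if i = j then (1 : K) else 0) (L : Matrix n n K) :
    Lᵀ * L = (of v * L)ᵀ * diagonal 1 * (of v * L) := by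
  rw [← transpose_mul_sum_smul_vecMulVec_self_mul]
  simp [sum_vecMulVec_self_eq_one horth]

theorem eq_transpose_mul_diagonal_mul_of_inv_transpose_mul_mul_inv (v : n → n → K)
    {L : Matrix n n K} (hL : IsUnit L.det) {B : Matrix n n K} {d : n → K}
    (h : L⁻¹ᵀ * B * L⁻¹ = ∑ j, d j • vecMulVec (v j) (v j)) :
    B = (of v * L)ᵀ * diagonal d * (of v * L) := by
  rw [← transpose_mul_sum_smul_vecMulVec_self_mul, ← h, transpose_nonsing_inv]
  simp only [← Matrix.mul_assoc, mul_nonsing_inv _ (det_transpose L ▸ hL), Matrix.one_mul]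
  simp only [Matrix.mul_assoc, nonsing_inv_mul _ hL, Matrix.mul_one]

theorem inv_mul_inv_smul_one_add_smul_sum_filter_mul_inv_transpose {v : n → n → K}
    (horth : ∀ i j, v i ⬝ᵥ v j = if i = j then (1 : K) else 0) (L : Matrix n n K) (σ μ : K)
    (d : n → K) (p : n → Prop) [DecidablePred p] :
    L⁻¹ * (σ • 1 + μ • ∑ j ∈ univ.filter p, d j • vecMulVec (v j) (v j))⁻¹ * L⁻¹ᵀ =
      ((of v * L)ᵀ * diagonal (fun j => σ * 1 + μ * if p j then d j else 0) * (of v * L))⁻¹ := by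
  rw [← transpose_mul_sum_smul_vecMulVec_self_mul, mul_inv_rev (Lᵀ * _), mul_inv_rev Lᵀ,
    ← transpose_nonsing_inv, ← Matrix.mul_assoc]
  congr 3
  rw [sum_filter, ← sum_vecMulVec_self_eq_one horth, smul_sum, smul_sum, ← sum_add_distrib]
  refine sum_congr rfl fun j _ => ?_
  split_ifs <;> simp [add_smul, smul_smul]

theorem smul_sum_filter_smul_inv_mul_vecMulVec_self_mul_inv_transpose {v : n → n → K}
    (horth : ∀ i j, v i ⬝ᵥ v j = if i = j then (1 : K) else 0) (L : Matrix n n K) (a : K)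
    (g : n → K) (p : n → Prop) [DecidablePred p] :
    a • ∑ j ∈ univ.filter p, g j • (L⁻¹ * vecMulVec (v j) (v j) * L⁻¹ᵀ) =
      (of v * L)⁻¹ * diagonal (fun j => a * if p j then g j else 0) * (of v * L)⁻¹ᵀ := by
  rw [← inv_mul_sum_smul_vecMulVec_self_mul_inv_transpose horth, sum_filter, smul_sum,
    Matrix.mul_sum, Matrix.sum_mul]
  refine sum_congr rfl fun j _ => ?_
  split_ifs <;> simp [smul_smul]

end Matrix

open Matrix

theorem inv_mixed_weight_sub_inv_weight {ℓ μ σ x : ℝ} (p : Prop) [Decidable p] (hσ : 0 < σ)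
    (hℓμx : 0 ≤ ℓ * μ * x) :
    (ℓ * (μ * x + σ * 1) + (1 - ℓ) * (σ * 1 + μ * if p then x else 0))⁻¹ -
        (σ * 1 + μ * if p then x else 0)⁻¹ =
      -(1 / σ) * if p then 0 else ℓ * μ * x / (ℓ * μ * x + σ) := by
  split_ifs
  · rw [show ℓ * (μ * x + σ * 1) + (1 - ℓ) * (σ * 1 + μ * x) = σ * 1 + μ * x by ring, sub_self,
      mul_zero]
  · rw [show ℓ * (μ * x + σ * 1) + (1 - ℓ) * (σ * 1 + μ * 0) = ℓ * μ * x + σ by ring,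
      show σ * 1 + μ * 0 = σ by ring]
    have : ℓ * μ * x + σ ≠ 0 := by positivity
    field_simp
    ring

theorem stmt15_general
    (m n : ℕ)
    (A : Matrix (Fin m) (Fin n) ℝ) (L : Matrix (Fin n) (Fin n) ℝ) (hL : IsUnit L.det)
    (μ σ : ℝ) (hμ : 0 < μ) (hσ : 0 < σ)
    (v : Fin n → Fin n → ℝ) (lam : Fin n → ℝ)
    (horth : ∀ i j, v i ⬝ᵥ v j = if i = j then (1 : ℝ) else 0)
    (hlam_nonneg : ∀ j, 0 ≤ lam j)
    (hHdecomp : (L⁻¹)ᵀ * Aᵀ * A * L⁻¹ = ∑ j, lam j • vecMulVec (v j) (v j))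
    (k : ℕ)
    (Γcond : Matrix (Fin n) (Fin n) ℝ)
    (hΓcond : Γcond = (μ • (Aᵀ * A) + σ • (Lᵀ * L))⁻¹)
    (Γhat : Matrix (Fin n) (Fin n) ℝ)
    (hΓhat : Γhat = L⁻¹ * (σ • (1 : Matrix (Fin n) (Fin n) ℝ) +
        μ • ∑ j ∈ Finset.univ.filter (fun j : Fin n => (j : ℕ) < k),
          lam j • vecMulVec (v j) (v j))⁻¹ * (L⁻¹)ᵀ)
    :
    ∀ ℓ : ℕ, 0 < ℓ →
      IsUnit ((ℓ : ℝ) • Γcond⁻¹ + (1 - (ℓ : ℝ)) • Γhat⁻¹).det ∧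
      ((ℓ : ℝ) • Γcond⁻¹ + (1 - (ℓ : ℝ)) • Γhat⁻¹)⁻¹ - Γhat =
        -(1 / σ) • ∑ j ∈ Finset.univ.filter (fun j : Fin n => k ≤ (j : ℕ)),
          (((ℓ : ℝ) * μ * lam j) / ((ℓ : ℝ) * μ * lam j + σ)) •
            (L⁻¹ * vecMulVec (v j) (v j) * (L⁻¹)ᵀ) := by
  intro ℓ _
  set c : Fin n → ℝ := fun j => μ * lam j + σ * 1
  set t : Fin n → ℝ := fun j => σ * 1 + μ * if (j : ℕ) < k then lam j else 0
  have hc (j : Fin n) : c j ≠ 0 := by have := hlam_nonneg j; positivity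
  have ht (j : Fin n) : t j ≠ 0 := by have := hlam_nonneg j; positivity
  have hw (j : Fin n) : (ℓ : ℝ) * c j + (1 - ℓ) * t j ≠ 0 := by
    have := hlam_nonneg j
    simp only [c, t]
    split_ifs <;> ring_nf <;> positivity
  have hcond : Γcond = ((of v * L)ᵀ * diagonal c * (of v * L))⁻¹ := by
    rw [hΓcond, eq_transpose_mul_diagonal_mul_of_inv_transpose_mul_mul_inv v hL
      (B := Aᵀ * A) (by rwa [← Matrix.mul_assoc]),
      transpose_mul_self_eq_transpose_mul_diagonal_one_mul horth,
      smul_transpose_mul_diagonal_mul_add_smul]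
    rfl
  have hhat : Γhat = ((of v * L)ᵀ * diagonal t * (of v * L))⁻¹ := by
    rw [hΓhat, inv_mul_inv_smul_one_add_smul_sum_filter_mul_inv_transpose horth]
  obtain ⟨hunit, hdiff⟩ := isUnit_det_smul_inv_add_smul_inv_and_inv_sub
    (isUnit_det_of_mul_of_isUnit_det horth hL) hc ht hw hcond hhat
  refine ⟨hunit, ?_⟩
  rw [hdiff, smul_sum_filter_smul_inv_mul_vecMulVec_self_mul_inv_transpose horth]
  congr 3
  funext j
  simpa only [← not_lt, ite_not] using
    inv_mixed_weight_sub_inv_weight ((j : ℕ) < k) hσ (by have := hlam_nonneg j; positivity)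

theorem stmt15
    (m n : ℕ) (hm : 0 < m) (hn : 0 < n)
    (A : Matrix (Fin m) (Fin n) ℝ) (L : Matrix (Fin n) (Fin n) ℝ) (hL : IsUnit L.det)
    (μ σ : ℝ) (hμ : 0 < μ) (hσ : 0 < σ)
    (v : Fin n → Fin n → ℝ) (lam : Fin n → ℝ)
    (horth : ∀ i j, v i ⬝ᵥ v j = if i = j then (1 : ℝ) else 0)
    (hlam_nonneg : ∀ j, 0 ≤ lam j) (hlam_anti : Antitone lam)
    (hHdecomp : (L⁻¹)ᵀ * Aᵀ * A * L⁻¹ = ∑ j, lam j • vecMulVec (v j) (v j))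
    (k : ℕ) (hk : k ≤ n)
    (Γcond : Matrix (Fin n) (Fin n) ℝ)
    (hΓcond : Γcond = (μ • (Aᵀ * A) + σ • (Lᵀ * L))⁻¹)
    (Γhat : Matrix (Fin n) (Fin n) ℝ)
    (hΓhat : Γhat = L⁻¹ * (σ • (1 : Matrix (Fin n) (Fin n) ℝ) +
        μ • ∑ j ∈ Finset.univ.filter (fun j : Fin n => (j : ℕ) < k),
          lam j • vecMulVec (v j) (v j))⁻¹ * (L⁻¹)ᵀ)
    :
    ∀ ℓ : ℕ, 0 < ℓ →
      IsUnit ((ℓ : ℝ) • Γcond⁻¹ + (1 - (ℓ : ℝ)) • Γhat⁻¹).det ∧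
      ((ℓ : ℝ) • Γcond⁻¹ + (1 - (ℓ : ℝ)) • Γhat⁻¹)⁻¹ - Γhat =
        -(1 / σ) • ∑ j ∈ Finset.univ.filter (fun j : Fin n => k ≤ (j : ℕ)),
          (((ℓ : ℝ) * μ * lam j) / ((ℓ : ℝ) * μ * lam j + σ)) •
            (L⁻¹ * vecMulVec (v j) (v j) * (L⁻¹)ᵀ) :=
  stmt15_general m n A L hL μ σ hμ hσ v lam horth hlam_nonneg hHdecomp k Γcond hΓcond Γhat hΓhat
end

section
/- For every x ∈ ℝ^n, the target and proposal densities satisfy the exact identity h(x) = N₁ · g(x) · w(x). -/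
open Matrix MeasureTheory ProbabilityTheory Finset

noncomputable section

namespace Stmt16Aux

variable {n : ℕ}

lemma sum_eq (v : Fin n → Fin n → ℝ) (f : Fin n → ℝ) :
    ∑ j, f j • vecMulVec (v j) (v j)
      = (Matrix.of v)ᵀ * Matrix.diagonal f * (Matrix.of v) := by
  ext i i'
  simp only [Matrix.sum_apply, Matrix.smul_apply, Matrix.vecMulVec_apply,
    Matrix.mul_apply, Matrix.diagonal_apply, Matrix.transpose_apply, Matrix.of_apply]
  refine Finset.sum_congr rfl fun x _ => ?_
  rw [Finset.sum_eq_single x]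
  · simp only [if_pos rfl, smul_eq_mul, if_true]; ring
  · intro t _ ht; simp [ht]
  · simp

lemma conj_mul (V : Matrix (Fin n) (Fin n) ℝ) (hV : V * Vᵀ = 1) (d e : Fin n → ℝ) :
    (Vᵀ * Matrix.diagonal d * V) * (Vᵀ * Matrix.diagonal e * V)
      = Vᵀ * Matrix.diagonal (fun j => d j * e j) * V := by
  have : Matrix.diagonal d * (V * Vᵀ) * Matrix.diagonal e = Matrix.diagonal fun j => d j * e j := by
    rw [hV, Matrix.mul_one, Matrix.diagonal_mul_diagonal]
  calc (Vᵀ * Matrix.diagonal d * V) * (Vᵀ * Matrix.diagonal e * V)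
      = Vᵀ * (Matrix.diagonal d * (V * Vᵀ) * Matrix.diagonal e) * V := by
        simp only [Matrix.mul_assoc]
    _ = Vᵀ * Matrix.diagonal (fun j => d j * e j) * V := by rw [this]

lemma conj_add (V : Matrix (Fin n) (Fin n) ℝ) (d e : Fin n → ℝ) :
    (Vᵀ * Matrix.diagonal d * V) + (Vᵀ * Matrix.diagonal e * V)
      = Vᵀ * Matrix.diagonal (fun j => d j + e j) * V := by
  rw [← Matrix.add_mul, ← Matrix.mul_add, ← Matrix.diagonal_add]

lemma conj_sub (V : Matrix (Fin n) (Fin n) ℝ) (d e : Fin n → ℝ) :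
    (Vᵀ * Matrix.diagonal d * V) - (Vᵀ * Matrix.diagonal e * V)
      = Vᵀ * Matrix.diagonal (fun j => d j - e j) * V := by
  rw [← Matrix.sub_mul, ← Matrix.mul_sub, ← Matrix.diagonal_sub]

lemma conj_one (V : Matrix (Fin n) (Fin n) ℝ) (hV : V * Vᵀ = 1) :
    Vᵀ * Matrix.diagonal (fun _ => (1:ℝ)) * V = 1 := by
  have hV' : Vᵀ * V = 1 := mul_eq_one_comm.mp hV
  rw [Matrix.diagonal_one, Matrix.mul_one, hV']

lemma conj_inv (V : Matrix (Fin n) (Fin n) ℝ) (hV : V * Vᵀ = 1) (d : Fin n → ℝ)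
    (hd : ∀ j, d j ≠ 0) :
    (Vᵀ * Matrix.diagonal d * V)⁻¹ = Vᵀ * Matrix.diagonal (fun j => (d j)⁻¹) * V := by
  apply Matrix.inv_eq_right_inv
  rw [conj_mul V hV]
  have : (fun j => d j * (d j)⁻¹) = fun _ => (1:ℝ) := by
    funext j; exact mul_inv_cancel₀ (hd j)
  rw [this, conj_one V hV]

lemma conj_det (V : Matrix (Fin n) (Fin n) ℝ) (hV : V * Vᵀ = 1) (d : Fin n → ℝ) :
    (Vᵀ * Matrix.diagonal d * V).det = ∏ j, d j := by
  have h1 : V.det * V.det = 1 := by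
    have := congrArg Matrix.det hV
    rwa [Matrix.det_mul, Matrix.det_transpose, Matrix.det_one] at this
  rw [Matrix.det_mul, Matrix.det_mul, Matrix.det_diagonal, Matrix.det_transpose]
  linear_combination (∏ j, d j) * h1

lemma conj_transpose_eq (V : Matrix (Fin n) (Fin n) ℝ) (d : Fin n → ℝ) :
    (Vᵀ * Matrix.diagonal d * V)ᵀ = Vᵀ * Matrix.diagonal d * V := by
  rw [Matrix.transpose_mul, Matrix.transpose_mul, Matrix.transpose_transpose,
    Matrix.diagonal_transpose, Matrix.mul_assoc]

lemma quadform (v : Fin n → Fin n → ℝ) (e : Fin n → ℝ) (c : Fin n → ℝ) :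
    c ⬝ᵥ (((Matrix.of v)ᵀ * Matrix.diagonal e * (Matrix.of v)) *ᵥ c)
      = ∑ j, e j * (v j ⬝ᵥ c) ^ 2 := by
  rw [← sum_eq]
  simp only [dotProduct, Matrix.mulVec, Matrix.sum_apply, Matrix.smul_apply,
    Matrix.vecMulVec_apply, smul_eq_mul, dotProduct]
  have hr : ∀ j, e j * (∑ i, v j i * c i) ^ 2
      = ∑ x : Fin n, ∑ x1 : Fin n, e j * ((v j x * c x) * (v j x1 * c x1)) := by
    intro j
    rw [sq, Finset.sum_mul_sum, Finset.mul_sum]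
    exact Finset.sum_congr rfl fun x _ => by rw [Finset.mul_sum]
  simp only [hr, Finset.sum_mul, Finset.mul_sum]
  conv_lhs => enter [2, x]; rw [Finset.sum_comm]
  rw [Finset.sum_comm]
  refine Finset.sum_congr rfl fun x2 _ => ?_
  refine Finset.sum_congr rfl fun x _ => ?_
  refine Finset.sum_congr rfl fun x1 _ => ?_
  ring

lemma smul_sandwich (X M Y : Matrix (Fin n) (Fin n) ℝ) (r : ℝ) :
    r • (X * M * Y) = X * (r • M) * Y := by
  rw [Matrix.mul_smul, Matrix.smul_mul]

lemma smul_conj (V : Matrix (Fin n) (Fin n) ℝ) (r : ℝ) (d : Fin n → ℝ) :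
    r • (Vᵀ * Matrix.diagonal d * V) = Vᵀ * Matrix.diagonal (fun j => r * d j) * V := by
  rw [smul_sandwich, ← Matrix.diagonal_smul]
  rfl

lemma conj_const (V : Matrix (Fin n) (Fin n) ℝ) (hV : V * Vᵀ = 1) (r : ℝ) :
    r • (1 : Matrix (Fin n) (Fin n) ℝ) = Vᵀ * Matrix.diagonal (fun _ => r) * V := by
  rw [← conj_one V hV, smul_conj]
  simp

lemma sandwich_add (X M N Y : Matrix (Fin n) (Fin n) ℝ) :
    X * M * Y + X * N * Y = X * (M + N) * Y := by
  rw [Matrix.mul_add, Matrix.add_mul]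

lemma sandwich_sub (X M N Y : Matrix (Fin n) (Fin n) ℝ) :
    X * M * Y - X * N * Y = X * (M - N) * Y := by
  rw [Matrix.mul_sub, Matrix.sub_mul]

lemma dot_symm (M : Matrix (Fin n) (Fin n) ℝ) (hM : Mᵀ = M) (y z : Fin n → ℝ) :
    y ⬝ᵥ (M *ᵥ z) = z ⬝ᵥ (M *ᵥ y) := by
  rw [Matrix.dotProduct_mulVec, ← Matrix.mulVec_transpose, hM, dotProduct_comm]

lemma scalar_id (sg a q m2 : ℝ) (hs : 0 < sg) (ha : 0 ≤ a) :
    m2/(2*sg) * (a/(a+sg) * q^2) = m2/2 * ((sg⁻¹ - (sg+a)⁻¹) * q^2) := by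
  have h1 : a + sg ≠ 0 := by positivity
  have h2 : sg + a ≠ 0 := by positivity
  have h3 : sg ≠ 0 := ne_of_gt hs
  field_simp
  try ring
  try exact Or.inl trivial

end Stmt16Aux

open Stmt16Aux

set_option maxHeartbeats 1000000

theorem stmt16
    (m n : ℕ) (hm : 0 < m) (hn : 0 < n)
    (A : Matrix (Fin m) (Fin n) ℝ) (L : Matrix (Fin n) (Fin n) ℝ) (hL : IsUnit L.det)
    (μ σ : ℝ) (hμ : 0 < μ) (hσ : 0 < σ)
    (b : Fin m → ℝ)
    (v : Fin n → Fin n → ℝ) (lam : Fin n → ℝ)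
    (horth : ∀ i j, v i ⬝ᵥ v j = if i = j then (1 : ℝ) else 0)
    (hlam_nonneg : ∀ j, 0 ≤ lam j) (hlam_anti : Antitone lam)
    (hHdecomp : (L⁻¹)ᵀ * Aᵀ * A * L⁻¹ = ∑ j, lam j • vecMulVec (v j) (v j))
    (k : ℕ) (hk : k ≤ n)
    (Γcond : Matrix (Fin n) (Fin n) ℝ)
    (hΓcond : Γcond = (μ • (Aᵀ * A) + σ • (Lᵀ * L))⁻¹)
    (Γhat : Matrix (Fin n) (Fin n) ℝ)
    (hΓhat : Γhat = L⁻¹ * (σ • (1 : Matrix (Fin n) (Fin n) ℝ) +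
        μ • ∑ j ∈ Finset.univ.filter (fun j : Fin n => (j : ℕ) < k),
          lam j • vecMulVec (v j) (v j))⁻¹ * (L⁻¹)ᵀ)
    (xcond : Fin n → ℝ) (hxcond : xcond = μ • (Γcond *ᵥ (Aᵀ *ᵥ b)))
    (xhat : Fin n → ℝ) (hxhat : xhat = μ • (Γhat *ᵥ (Aᵀ *ᵥ b)))
    (w : (Fin n → ℝ) → ℝ)
    (hw : ∀ x, w x = Real.exp (-(1/2) * (x ⬝ᵥ ((Γcond⁻¹ - Γhat⁻¹) *ᵥ x))))
    (hfun : (Fin n → ℝ) → ℝ)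
    (hhfun : ∀ x, hfun x = (2 * Real.pi) ^ (-(n : ℝ) / 2) * Γcond.det ^ (-(1 : ℝ) / 2) *
        Real.exp (-(1/2) * ((x - xcond) ⬝ᵥ (Γcond⁻¹ *ᵥ (x - xcond)))))
    (gfun : (Fin n → ℝ) → ℝ)
    (hgfun : ∀ x, gfun x = (2 * Real.pi) ^ (-(n : ℝ) / 2) * Γhat.det ^ (-(1 : ℝ) / 2) *
        Real.exp (-(1/2) * ((x - xhat) ⬝ᵥ (Γhat⁻¹ *ᵥ (x - xhat)))))
    (N₁ : ℝ)
    (hN₁ : N₁ = Real.exp ((μ ^ 2 / (2 * σ)) *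
        ∑ j ∈ Finset.univ.filter (fun j : Fin n => k ≤ (j : ℕ)),
          ((μ * lam j) / (μ * lam j + σ)) * (b ⬝ᵥ (A *ᵥ (L⁻¹ *ᵥ v j))) ^ 2) *
      ∏ j ∈ Finset.univ.filter (fun j : Fin n => k ≤ (j : ℕ)),
        Real.sqrt (1 + μ * lam j / σ))
    :
    ∀ x : Fin n → ℝ, hfun x = N₁ * gfun x * w x := by
  -- basic invertibility facts
  have hL1 : L * L⁻¹ = 1 := Matrix.mul_nonsing_inv L hL
  have hL2 : L⁻¹ * L = 1 := Matrix.nonsing_inv_mul L hL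
  have hLt1 : Lᵀ * (L⁻¹)ᵀ = 1 := by rw [← Matrix.transpose_mul, hL2, Matrix.transpose_one]
  have hLt2 : (L⁻¹)ᵀ * Lᵀ = 1 := by rw [← Matrix.transpose_mul, hL1, Matrix.transpose_one]
  have hdl0 : L⁻¹.det ≠ 0 := by
    intro h
    have := congrArg Matrix.det hL2
    rw [Matrix.det_mul, h, Matrix.det_one, zero_mul] at this
    exact zero_ne_one this
  -- the orthogonal matrix
  have hVVt : (Matrix.of v) * (Matrix.of v)ᵀ = 1 := by
    ext i j
    have := horth i j
    simpa [Matrix.mul_apply, dotProduct, Matrix.one_apply] using this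
  -- diagonal entry functions
  set d : Fin n → ℝ := fun j => σ + μ * lam j with hd_def
  set dk : Fin n → ℝ := fun j => if (j : ℕ) < k then σ + μ * lam j else σ with hdk_def
  have hd0 : ∀ j, 0 < d j := fun j => by
    have := hlam_nonneg j; simp only [hd_def]; nlinarith
  have hdk0 : ∀ j, 0 < dk j := fun j => by
    have := hlam_nonneg j; simp only [hdk_def]; split <;> nlinarith
  have hdne : ∀ j, d j ≠ 0 := fun j => ne_of_gt (hd0 j)
  have hdkne : ∀ j, dk j ≠ 0 := fun j => ne_of_gt (hdk0 j)
  -- A^T A in terms of the spectral decomposition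
  have hAA : Aᵀ * A = Lᵀ * ((Matrix.of v)ᵀ * Matrix.diagonal lam * (Matrix.of v)) * L := by
    have h2 := congrArg (fun M => Lᵀ * M * L) hHdecomp
    rw [sum_eq] at h2
    rw [← h2]
    have e1 : Lᵀ * ((L⁻¹)ᵀ * Aᵀ * A * L⁻¹) * L
        = (Lᵀ * (L⁻¹)ᵀ) * (Aᵀ * A) * (L⁻¹ * L) := by
      simp only [Matrix.mul_assoc]
    rw [e1, hLt1, hL2, Matrix.one_mul, Matrix.mul_one]
  -- the conditional precision matrix
  have hBig : μ • (Aᵀ * A) + σ • (Lᵀ * L)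
      = Lᵀ * ((Matrix.of v)ᵀ * Matrix.diagonal d * (Matrix.of v)) * L := by
    have hfun1 : (fun j => μ * lam j + σ) = d := by
      funext j; simp only [hd_def]; ring
    have hσL : Lᵀ * (σ • (1 : Matrix (Fin n) (Fin n) ℝ)) * L = σ • (Lᵀ * L) := by
      rw [Matrix.mul_smul, Matrix.mul_one, Matrix.smul_mul]
    rw [hAA, smul_sandwich, ← hσL, smul_conj, conj_const (Matrix.of v) hVVt σ, sandwich_add,
      conj_add, hfun1]
  have hdetBig : IsUnit (Lᵀ * ((Matrix.of v)ᵀ * Matrix.diagonal d * (Matrix.of v)) * L).det := by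
    rw [Matrix.det_mul, Matrix.det_mul, conj_det _ hVVt, Matrix.det_transpose]
    refine isUnit_iff_ne_zero.mpr ?_
    have := hL.ne_zero
    have hprod : (0:ℝ) < ∏ j : Fin n, d j := Finset.prod_pos fun j _ => hd0 j
    intro hcontra
    rcases mul_eq_zero.mp hcontra with h | h
    · rcases mul_eq_zero.mp h with h' | h'
      · exact this h'
      · exact (ne_of_gt hprod) h'
    · exact this h
  have hΓc : Γcond = L⁻¹ * ((Matrix.of v)ᵀ * Matrix.diagonal (fun j => (d j)⁻¹) * (Matrix.of v)) * (L⁻¹)ᵀ := by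
    rw [hΓcond, hBig]
    apply Matrix.inv_eq_right_inv
    calc (Lᵀ * ((Matrix.of v)ᵀ * Matrix.diagonal d * (Matrix.of v)) * L)
          * (L⁻¹ * ((Matrix.of v)ᵀ * Matrix.diagonal (fun j => (d j)⁻¹) * (Matrix.of v)) * (L⁻¹)ᵀ)
        = Lᵀ * (((Matrix.of v)ᵀ * Matrix.diagonal d * (Matrix.of v)) * (L * L⁻¹)
            * ((Matrix.of v)ᵀ * Matrix.diagonal (fun j => (d j)⁻¹) * (Matrix.of v))) * (L⁻¹)ᵀ := by
          simp only [Matrix.mul_assoc]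
      _ = 1 := by
          rw [hL1, Matrix.mul_one, conj_mul _ hVVt]
          have : (fun j => d j * (d j)⁻¹) = fun _ => (1:ℝ) := by
            funext j; exact mul_inv_cancel₀ (hdne j)
          rw [this, conj_one _ hVVt, Matrix.mul_one, hLt1]
  have hΓcInv : Γcond⁻¹ = Lᵀ * ((Matrix.of v)ᵀ * Matrix.diagonal d * (Matrix.of v)) * L := by
    rw [hΓcond, hBig, Matrix.nonsing_inv_nonsing_inv _ hdetBig]
  -- the truncated matrix
  set lamk : Fin n → ℝ := fun j => if (j : ℕ) < k then lam j else 0 with hlamk_def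
  have hPk : (∑ j ∈ Finset.univ.filter (fun j : Fin n => (j : ℕ) < k),
        lam j • vecMulVec (v j) (v j))
      = (Matrix.of v)ᵀ * Matrix.diagonal lamk * (Matrix.of v) := by
    rw [Finset.sum_filter, ← sum_eq]
    refine Finset.sum_congr rfl fun j _ => ?_
    by_cases hj : (j : ℕ) < k
    · simp [hlamk_def, hj]
    · simp [hlamk_def, hj]
  have hMid : σ • (1 : Matrix (Fin n) (Fin n) ℝ)
        + μ • ((Matrix.of v)ᵀ * Matrix.diagonal lamk * (Matrix.of v))
      = (Matrix.of v)ᵀ * Matrix.diagonal dk * (Matrix.of v) := by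
    have hfun2 : (fun j => σ + μ * lamk j) = dk := by
      funext j
      simp only [hdk_def, hlamk_def]
      by_cases hj : (j : ℕ) < k <;> simp [hj]
    rw [conj_const (Matrix.of v) hVVt σ, smul_conj, conj_add, hfun2]
  have hΓh : Γhat = L⁻¹ * ((Matrix.of v)ᵀ * Matrix.diagonal (fun j => (dk j)⁻¹) * (Matrix.of v)) * (L⁻¹)ᵀ := by
    rw [hΓhat, hPk, hMid, conj_inv _ hVVt _ hdkne]
  have hΓhInv : Γhat⁻¹ = Lᵀ * ((Matrix.of v)ᵀ * Matrix.diagonal dk * (Matrix.of v)) * L := by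
    rw [hΓh]
    apply Matrix.inv_eq_right_inv
    calc (L⁻¹ * ((Matrix.of v)ᵀ * Matrix.diagonal (fun j => (dk j)⁻¹) * (Matrix.of v)) * (L⁻¹)ᵀ)
          * (Lᵀ * ((Matrix.of v)ᵀ * Matrix.diagonal dk * (Matrix.of v)) * L)
        = L⁻¹ * (((Matrix.of v)ᵀ * Matrix.diagonal (fun j => (dk j)⁻¹) * (Matrix.of v)) * ((L⁻¹)ᵀ * Lᵀ)
            * ((Matrix.of v)ᵀ * Matrix.diagonal dk * (Matrix.of v))) * L := by
          simp only [Matrix.mul_assoc]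
      _ = 1 := by
          rw [hLt2, Matrix.mul_one, conj_mul _ hVVt]
          have : (fun j => (dk j)⁻¹ * dk j) = fun _ => (1:ℝ) := by
            funext j; exact inv_mul_cancel₀ (hdkne j)
          rw [this, conj_one _ hVVt, Matrix.mul_one, hL2]
  -- determinants
  have hdetC : Γcond.det = L⁻¹.det ^ 2 * ∏ j : Fin n, (d j)⁻¹ := by
    rw [hΓc, Matrix.det_mul, Matrix.det_mul, conj_det _ hVVt, Matrix.det_transpose]
    ring
  have hdetH : Γhat.det = L⁻¹.det ^ 2 * ∏ j : Fin n, (dk j)⁻¹ := by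
    rw [hΓh, Matrix.det_mul, Matrix.det_mul, conj_det _ hVVt, Matrix.det_transpose]
    ring
  have hdetCpos : 0 < Γcond.det := by
    rw [hdetC]
    have h1 : 0 < L⁻¹.det ^ 2 := by positivity
    have h2 : (0:ℝ) < ∏ j : Fin n, (d j)⁻¹ := Finset.prod_pos fun j _ => inv_pos.mpr (hd0 j)
    positivity
  have hdetHpos : 0 < Γhat.det := by
    rw [hdetH]
    have h1 : 0 < L⁻¹.det ^ 2 := by positivity
    have h2 : (0:ℝ) < ∏ j : Fin n, (dk j)⁻¹ := Finset.prod_pos fun j _ => inv_pos.mpr (hdk0 j)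
    positivity
  -- determinant relation
  set R : ℝ := ∏ j ∈ Finset.univ.filter (fun j : Fin n => k ≤ (j : ℕ)), (1 + μ * lam j / σ)
    with hR_def
  have hfacpos : ∀ j : Fin n, 0 < 1 + μ * lam j / σ := fun j => by
    have := hlam_nonneg j; positivity
  have hRpos : 0 < R := Finset.prod_pos fun j _ => hfacpos j
  have hdetRel : Γhat.det = Γcond.det * R := by
    rw [hdetC, hdetH, hR_def]
    have key : ∀ j : Fin n, (dk j)⁻¹ = (d j)⁻¹ * (if k ≤ (j:ℕ) then 1 + μ * lam j / σ else 1) := by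
      intro j
      by_cases hj : (j : ℕ) < k
      · rw [if_neg (not_le.mpr hj)] ; simp only [hdk_def, hd_def, if_pos hj, mul_one]
      · rw [if_pos (not_lt.mp hj)]
        simp only [hdk_def, hd_def, if_neg hj]
        have h1 : σ + μ * lam j ≠ 0 := hdne j
        field_simp
    calc L⁻¹.det ^ 2 * ∏ j : Fin n, (dk j)⁻¹
        = L⁻¹.det ^ 2 * ∏ j : Fin n, ((d j)⁻¹ * (if k ≤ (j:ℕ) then 1 + μ * lam j / σ else 1)) := by
          rw [Finset.prod_congr rfl fun j _ => key j]
      _ = L⁻¹.det ^ 2 * ((∏ j : Fin n, (d j)⁻¹) * ∏ j : Fin n, (if k ≤ (j:ℕ) then 1 + μ * lam j / σ else 1)) := by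
          rw [Finset.prod_mul_distrib]
      _ = L⁻¹.det ^ 2 * (∏ j : Fin n, (d j)⁻¹)
            * ∏ j ∈ Finset.univ.filter (fun j : Fin n => k ≤ (j : ℕ)), (1 + μ * lam j / σ) := by
          rw [Finset.prod_filter]
          ring
  have hdetexp : Γcond.det ^ (-(1:ℝ)/2)
      = (∏ j ∈ Finset.univ.filter (fun j : Fin n => k ≤ (j : ℕ)), Real.sqrt (1 + μ * lam j / σ))
        * Γhat.det ^ (-(1:ℝ)/2) := by
    have hsqrtprod : (∏ j ∈ Finset.univ.filter (fun j : Fin n => k ≤ (j : ℕ)),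
        Real.sqrt (1 + μ * lam j / σ)) = R ^ ((1:ℝ)/2) := by
      rw [hR_def, ← Real.finset_prod_rpow _ _ (fun j _ => le_of_lt (hfacpos j))]
      exact Finset.prod_congr rfl fun j _ => Real.sqrt_eq_rpow _
    rw [hsqrtprod, hdetRel, Real.mul_rpow (le_of_lt hdetCpos) (le_of_lt hRpos)]
    rw [← mul_assoc, mul_comm (R ^ ((1:ℝ)/2)) _, mul_assoc, ← Real.rpow_add hRpos]
    norm_num
  -- main per-point identity
  intro x
  set w0 : Fin n → ℝ := Aᵀ *ᵥ b with hw0_def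
  set c : Fin n → ℝ := (L⁻¹)ᵀ *ᵥ w0 with hc_def
  have hUnitC : IsUnit Γcond.det := isUnit_iff_ne_zero.mpr (ne_of_gt hdetCpos)
  have hUnitH : IsUnit Γhat.det := isUnit_iff_ne_zero.mpr (ne_of_gt hdetHpos)
  have hQxc : Γcond⁻¹ *ᵥ xcond = μ • w0 := by
    rw [hxcond, Matrix.mulVec_smul, Matrix.mulVec_mulVec, Matrix.nonsing_inv_mul _ hUnitC,
      Matrix.one_mulVec]
  have hQhxh : Γhat⁻¹ *ᵥ xhat = μ • w0 := by
    rw [hxhat, Matrix.mulVec_smul, Matrix.mulVec_mulVec, Matrix.nonsing_inv_mul _ hUnitH,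
      Matrix.one_mulVec]
  have hQt : (Γcond⁻¹)ᵀ = Γcond⁻¹ := by
    rw [hΓcInv, Matrix.transpose_mul, Matrix.transpose_mul, Matrix.transpose_transpose,
      conj_transpose_eq]
    simp only [Matrix.mul_assoc]
  have hQht : (Γhat⁻¹)ᵀ = Γhat⁻¹ := by
    rw [hΓhInv, Matrix.transpose_mul, Matrix.transpose_mul, Matrix.transpose_transpose,
      conj_transpose_eq]
    simp only [Matrix.mul_assoc]
  have expandC : (x - xcond) ⬝ᵥ (Γcond⁻¹ *ᵥ (x - xcond))
      = x ⬝ᵥ (Γcond⁻¹ *ᵥ x) - 2*μ*(x ⬝ᵥ w0) + μ^2 * ((Γcond *ᵥ w0) ⬝ᵥ w0) := by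
    rw [Matrix.mulVec_sub, dotProduct_sub, sub_dotProduct, sub_dotProduct,
      hQxc, dot_symm _ hQt xcond x, hQxc]
    rw [dotProduct_smul, dotProduct_smul, hxcond, smul_dotProduct]
    simp only [smul_eq_mul]
    ring
  have expandH : (x - xhat) ⬝ᵥ (Γhat⁻¹ *ᵥ (x - xhat))
      = x ⬝ᵥ (Γhat⁻¹ *ᵥ x) - 2*μ*(x ⬝ᵥ w0) + μ^2 * ((Γhat *ᵥ w0) ⬝ᵥ w0) := by
    rw [Matrix.mulVec_sub, dotProduct_sub, sub_dotProduct, sub_dotProduct,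
      hQhxh, dot_symm _ hQht xhat x, hQhxh]
    rw [dotProduct_smul, dotProduct_smul, hxhat, smul_dotProduct]
    simp only [smul_eq_mul]
    ring
  have expandW : x ⬝ᵥ ((Γcond⁻¹ - Γhat⁻¹) *ᵥ x)
      = x ⬝ᵥ (Γcond⁻¹ *ᵥ x) - x ⬝ᵥ (Γhat⁻¹ *ᵥ x) := by
    rw [Matrix.sub_mulVec, dotProduct_sub]
  -- quadratic form computation
  have quadf : ∀ f : Fin n → ℝ,
      ((L⁻¹ * ((Matrix.of v)ᵀ * Matrix.diagonal f * (Matrix.of v)) * (L⁻¹)ᵀ) *ᵥ w0) ⬝ᵥ w0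
        = ∑ j : Fin n, f j * (v j ⬝ᵥ c)^2 := by
    intro f
    rw [dotProduct_comm, ← Matrix.mulVec_mulVec, ← Matrix.mulVec_mulVec,
      Matrix.dotProduct_mulVec, ← Matrix.mulVec_transpose, ← hc_def]
    exact quadform v f c
  have hGdiff : (Γhat *ᵥ w0) ⬝ᵥ w0 - (Γcond *ᵥ w0) ⬝ᵥ w0
      = ∑ j : Fin n, ((dk j)⁻¹ - (d j)⁻¹) * (v j ⬝ᵥ c)^2 := by
    rw [hΓh, hΓc, quadf, quadf, ← Finset.sum_sub_distrib]
    exact Finset.sum_congr rfl fun j _ => by ring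
  have hq : ∀ j, v j ⬝ᵥ c = b ⬝ᵥ (A *ᵥ (L⁻¹ *ᵥ v j)) := by
    intro j
    rw [Matrix.dotProduct_mulVec b, ← Matrix.mulVec_transpose, ← hw0_def,
      Matrix.dotProduct_mulVec w0, ← Matrix.mulVec_transpose, ← hc_def,
      dotProduct_comm]
  -- scalar sum identity
  set Tsum : ℝ := ∑ j ∈ Finset.univ.filter (fun j : Fin n => k ≤ (j : ℕ)),
      ((μ * lam j) / (μ * lam j + σ)) * (b ⬝ᵥ (A *ᵥ (L⁻¹ *ᵥ v j))) ^ 2 with hTsum_def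
  have hS : (μ^2/(2*σ)) * Tsum = (μ^2/2) * ((Γhat *ᵥ w0) ⬝ᵥ w0 - (Γcond *ᵥ w0) ⬝ᵥ w0) := by
    rw [hGdiff, hTsum_def, Finset.sum_filter, Finset.mul_sum, Finset.mul_sum]
    refine Finset.sum_congr rfl fun j _ => ?_
    rw [← hq j]
    by_cases hj : (j : ℕ) < k
    · rw [if_neg (not_le.mpr hj)]
      simp only [hdk_def, hd_def, if_pos hj]
      ring
    · rw [if_pos (not_lt.mp hj)]
      simp only [hdk_def, hd_def, if_neg hj]
      exact scalar_id σ (μ * lam j) _ (μ^2) hσ (by have := hlam_nonneg j; positivity)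
  -- exponent identity
  have hexp : -(1/2) * ((x - xcond) ⬝ᵥ (Γcond⁻¹ *ᵥ (x - xcond)))
      = (μ^2/(2*σ)) * Tsum
        + (-(1/2) * ((x - xhat) ⬝ᵥ (Γhat⁻¹ *ᵥ (x - xhat))))
        + (-(1/2) * (x ⬝ᵥ ((Γcond⁻¹ - Γhat⁻¹) *ᵥ x))) := by
    rw [expandC, expandH, expandW]
    linear_combination -hS
  -- assembly
  rw [hhfun, hgfun, hw, hN₁, hdetexp, hexp, Real.exp_add, Real.exp_add]
  ring
end
end
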